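/- arXiv:math/0501003 — 16 statements merged into one kernel-verified Lean document; each statement's English description precedes it below -/
import Mathlib

section
/- Let X and Y be topological spaces and S ⊆ X × Y. Assume that the projection of S onto Y is connected, that for each y ∈ Y the section S^y = {x ∈ X : (x,y) ∈ S} is connected, and that for each x ∈ X the section S_x = {y ∈ Y : (x,y) ∈ S} is open in Y. Then S is connected. -/
theorem connected_of_sections_y_connected_x_open
    {X Y : Type*} [TopologicalSpace X] [TopologicalSpace Y]
    (S : Set (X × Y))
    (hproj : IsPreconnected (Prod.snd '' S))
    (hsecY : ∀ y : Y, IsPreconnected {x : X | (x, y) ∈ S})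
    (hsecX : ∀ x : X, IsOpen {y : Y | (x, y) ∈ S}) :
    IsPreconnected S := by
  rintro u v hu hv hsub ⟨⟨a, b⟩, haS, hau⟩ ⟨⟨c, d⟩, hcS, hcv⟩
  by_contra hne
  set U' : Set Y := ⋃ x, ({y | (x, y) ∈ S} ∩ {y | (x, y) ∈ u}) with hU'
  set V' : Set Y := ⋃ x, ({y | (x, y) ∈ S} ∩ {y | (x, y) ∈ v}) with hV'
  have hU'open : IsOpen U' :=
    isOpen_iUnion fun x => (hsecX x).inter (hu.preimage (Continuous.prodMk_right x))
  have hV'open : IsOpen V' :=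
    isOpen_iUnion fun x => (hsecX x).inter (hv.preimage (Continuous.prodMk_right x))
  have hsub' : Prod.snd '' S ⊆ U' ∪ V' := by
    rintro y ⟨⟨x, y'⟩, hxy, rfl⟩
    rcases hsub hxy with h | h
    · exact Or.inl (Set.mem_iUnion.2 ⟨x, hxy, h⟩)
    · exact Or.inr (Set.mem_iUnion.2 ⟨x, hxy, h⟩)
  have hneU : (Prod.snd '' S ∩ U').Nonempty :=
    ⟨b, ⟨(a, b), haS, rfl⟩, Set.mem_iUnion.2 ⟨a, haS, hau⟩⟩
  have hneV : (Prod.snd '' S ∩ V').Nonempty :=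
    ⟨d, ⟨(c, d), hcS, rfl⟩, Set.mem_iUnion.2 ⟨c, hcS, hcv⟩⟩
  obtain ⟨y, _, hyU, hyV⟩ := hproj U' V' hU'open hV'open hsub' hneU hneV
  obtain ⟨x1, h1S, h1u⟩ := Set.mem_iUnion.1 hyU
  obtain ⟨x2, h2S, h2v⟩ := Set.mem_iUnion.1 hyV
  have hC : IsPreconnected ((fun x => (x, y)) '' {x : X | (x, y) ∈ S}) :=
    (hsecY y).image _ (Continuous.continuousOn (by continuity))
  have hCsub : ((fun x => (x, y)) '' {x : X | (x, y) ∈ S}) ⊆ u ∪ v := by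
    rintro p ⟨x, hx, rfl⟩; exact hsub hx
  obtain ⟨p, ⟨x, hx, rfl⟩, hpu, hpv⟩ :=
    hC u v hu hv hCsub ⟨(x1, y), ⟨x1, h1S, rfl⟩, h1u⟩ ⟨(x2, y), ⟨x2, h2S, rfl⟩, h2v⟩
  exact hne ⟨(x, y), hx, hpu, hpv⟩
end

section
/- Let X and Y be topological spaces with X compact, and let S ⊆ X × Y be a closed set. Assume that the projection of S onto Y is connected and that for each y ∈ Y the section S^y = {x ∈ X : (x,y) ∈ S} is connected. Then S is connected. -/
theorem connected_of_closed_compact_sections_y_connected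
    {X Y : Type*} [TopologicalSpace X] [TopologicalSpace Y]
    [CompactSpace X]
    (S : Set (X × Y)) (hclosed : IsClosed S)
    (hproj : IsPreconnected (Prod.snd '' S))
    (hsecY : ∀ y : Y, IsPreconnected {x : X | (x, y) ∈ S}) :
    IsPreconnected S := by
  rintro u v hu hv hSuv ⟨a, haS, hau⟩ ⟨b, hbS, hbv⟩
  by_contra hne
  rw [Set.not_nonempty_iff_eq_empty] at hne
  -- the section over y cannot meet both u and v
  have key : ∀ y : Y, ∀ xu xv : X, (xu, y) ∈ S → (xu, y) ∈ u →
      (xv, y) ∈ S → (xv, y) ∈ v → False := by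
    intro y xu xv hxuS hxuu hxvS hxvv
    have hou : IsOpen {x : X | (x, y) ∈ u} := hu.preimage (Continuous.prodMk_left _)
    have hov : IsOpen {x : X | (x, y) ∈ v} := hv.preimage (Continuous.prodMk_left _)
    have hcov : {x : X | (x, y) ∈ S} ⊆ {x : X | (x, y) ∈ u} ∪ {x : X | (x, y) ∈ v} :=
      fun x hx => hSuv hx
    obtain ⟨x, hxS, hxu, hxv⟩ :=
      hsecY y _ _ hou hov hcov ⟨xu, hxuS, hxuu⟩ ⟨xv, hxvS, hxvv⟩
    have : (x, y) ∈ S ∩ (u ∩ v) := ⟨hxS, hxu, hxv⟩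
    rw [hne] at this
    exact this
  set Gu := (Prod.snd '' (S \ u))ᶜ with hGu_def
  set Gv := (Prod.snd '' (S \ v))ᶜ with hGv_def
  have hGu : IsOpen Gu :=
    (isClosedMap_snd_of_compactSpace _ (hclosed.sdiff hu)).isOpen_compl
  have hGv : IsOpen Gv :=
    (isClosedMap_snd_of_compactSpace _ (hclosed.sdiff hv)).isOpen_compl
  have memGu : ∀ y : Y, y ∈ Gu ↔ ∀ x : X, (x, y) ∈ S → (x, y) ∈ u := by
    intro y
    constructor
    · intro hy x hxS
      by_contra hxu
      exact hy ⟨(x, y), ⟨hxS, hxu⟩, rfl⟩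
    · rintro h ⟨⟨x, y'⟩, ⟨hxS, hxu⟩, rfl⟩
      exact hxu (h x hxS)
  have memGv : ∀ y : Y, y ∈ Gv ↔ ∀ x : X, (x, y) ∈ S → (x, y) ∈ v := by
    intro y
    constructor
    · intro hy x hxS
      by_contra hxv
      exact hy ⟨(x, y), ⟨hxS, hxv⟩, rfl⟩
    · rintro h ⟨⟨x, y'⟩, ⟨hxS, hxv⟩, rfl⟩
      exact hxv (h x hxS)
  -- cover of the projection
  have hcov : Prod.snd '' S ⊆ Gu ∪ Gv := by
    rintro y ⟨⟨x0, y'⟩, hx0S, rfl⟩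
    rcases hSuv hx0S with h | h
    · left
      rw [memGu]
      intro x hxS
      rcases hSuv hxS with h' | h'
      · exact h'
      · exact absurd (key _ x0 x hx0S h hxS h') not_false
    · right
      rw [memGv]
      intro x hxS
      rcases hSuv hxS with h' | h'
      · exact absurd (key _ x x0 hxS h' hx0S h) not_false
      · exact h'
  have hnea : (Prod.snd '' S ∩ Gu).Nonempty := by
    refine ⟨a.2, ⟨a, haS, rfl⟩, ?_⟩
    rw [memGu]
    intro x hxS
    rcases hSuv hxS with h' | h'
    · exact h'
    · exact absurd (key a.2 a.1 x haS hau hxS h') not_false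
  have hneb : (Prod.snd '' S ∩ Gv).Nonempty := by
    refine ⟨b.2, ⟨b, hbS, rfl⟩, ?_⟩
    rw [memGv]
    intro x hxS
    rcases hSuv hxS with h' | h'
    · exact absurd (key b.2 x b.1 hxS h' hbS hbv) not_false
    · exact h'
  obtain ⟨y, ⟨⟨x0, y'⟩, hx0S, rfl⟩, hyu, hyv⟩ := hproj Gu Gv hGu hGv hcov hnea hneb
  have h1 := (memGu _).1 hyu x0 hx0S
  have h2 := (memGv _).1 hyv x0 hx0S
  have : (x0, Prod.snd (x0, y')) ∈ S ∩ (u ∩ v) := ⟨hx0S, h1, h2⟩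
  rw [hne] at this
  exact this
end

section
/- Let X and Y be topological spaces and S ⊆ X × Y. Assume that the projection of S onto X is connected, that for each x ∈ X the section S_x = {y ∈ Y : (x,y) ∈ S} is connected, and that for each y ∈ Y the section S^y = {x ∈ X : (x,y) ∈ S} is open in X. Then S is connected. -/
theorem connected_of_sections_x_connected_y_open
    {X Y : Type*} [TopologicalSpace X] [TopologicalSpace Y]
    (S : Set (X × Y))
    (hproj : IsPreconnected (Prod.fst '' S))
    (hsecX : ∀ x : X, IsPreconnected {y : Y | (x, y) ∈ S})
    (hsecY : ∀ y : Y, IsOpen {x : X | (x, y) ∈ S}) :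
    IsPreconnected S := by
  rintro u v hu hv hSuv ⟨⟨a, b⟩, haS, hau⟩ ⟨⟨c, d⟩, hcS, hcv⟩
  set U : Set X := {x | ∃ y, (x, y) ∈ S ∧ (x, y) ∈ u} with hUdef
  set V : Set X := {x | ∃ y, (x, y) ∈ S ∧ (x, y) ∈ v} with hVdef
  have hUopen : IsOpen U := by
    have : U = ⋃ y : Y, ({x | (x, y) ∈ S} ∩ {x | (x, y) ∈ u}) := by
      ext x; simp [hUdef, Set.mem_iUnion]
    rw [this]
    exact isOpen_iUnion fun y => (hsecY y).inter (hu.preimage (Continuous.prodMk_left y))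
  have hVopen : IsOpen V := by
    have : V = ⋃ y : Y, ({x | (x, y) ∈ S} ∩ {x | (x, y) ∈ v}) := by
      ext x; simp [hVdef, Set.mem_iUnion]
    rw [this]
    exact isOpen_iUnion fun y => (hsecY y).inter (hv.preimage (Continuous.prodMk_left y))
  have hcover : Prod.fst '' S ⊆ U ∪ V := by
    rintro x ⟨⟨x', y⟩, hS, rfl⟩
    rcases hSuv hS with h | h
    · exact Or.inl ⟨y, hS, h⟩
    · exact Or.inr ⟨y, hS, h⟩
  obtain ⟨x, hxS, hxU, hxV⟩ := hproj U V hUopen hVopen hcover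
    ⟨a, ⟨(a, b), haS, rfl⟩, ⟨b, haS, hau⟩⟩ ⟨c, ⟨(c, d), hcS, rfl⟩, ⟨d, hcS, hcv⟩⟩
  obtain ⟨y₁, hy₁S, hy₁u⟩ := hxU
  obtain ⟨y₂, hy₂S, hy₂v⟩ := hxV
  obtain ⟨y, hyS, hyu, hyv⟩ := hsecX x {y | (x, y) ∈ u} {y | (x, y) ∈ v}
    (hu.preimage (Continuous.prodMk_right x)) (hv.preimage (Continuous.prodMk_right x))
    (fun y hy => hSuv hy) ⟨y₁, hy₁S, hy₁u⟩ ⟨y₂, hy₂S, hy₂v⟩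
  exact ⟨(x, y), hyS, hyu, hyv⟩
end

section
/- Let X and Y be topological spaces with Y compact, and let S ⊆ X × Y be a closed set. Assume that the projection of S onto X is connected and that for each x ∈ X the section S_x = {y ∈ Y : (x,y) ∈ S} is connected. Then S is connected. -/
theorem connected_of_closed_compactY_sections_x_connected
    {X Y : Type*} [TopologicalSpace X] [TopologicalSpace Y]
    [CompactSpace Y]
    (S : Set (X × Y)) (hclosed : IsClosed S)
    (hproj : IsPreconnected (Prod.fst '' S))
    (hsecX : ∀ x : X, IsPreconnected {y : Y | (x, y) ∈ S}) :
    IsPreconnected S := by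
  rintro U V hU hV hSUV ⟨⟨a, b⟩, haS, haU⟩ ⟨⟨c, d⟩, hcS, hcV⟩
  by_contra hcon
  rw [Set.not_nonempty_iff_eq_empty] at hcon
  have hdisj : ∀ p : X × Y, p ∈ S → p ∈ U → p ∈ V → False := by
    intro p hS' hU' hV'
    have : p ∈ S ∩ (U ∩ V) := ⟨hS', hU', hV'⟩
    rw [hcon] at this
    exact this
  -- each nonempty fiber lies entirely in U or entirely in V
  have key : ∀ x : X, ∀ y, (x, y) ∈ S →
      ((∀ z, (x, z) ∈ S → (x, z) ∈ U) ∨ (∀ z, (x, z) ∈ S → (x, z) ∈ V)) := by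
    intro x y hy
    by_contra h
    push_neg at h
    obtain ⟨⟨y1, hy1S, hy1U⟩, ⟨y2, hy2S, hy2V⟩⟩ := h
    have hy1V : (x, y1) ∈ V := (hSUV hy1S).resolve_left hy1U
    have hy2U : (x, y2) ∈ U := (hSUV hy2S).resolve_right hy2V
    have := hsecX x {z | (x, z) ∈ U} {z | (x, z) ∈ V}
      (hU.preimage (Continuous.prodMk_right x)) (hV.preimage (Continuous.prodMk_right x))
      (fun z hz => hSUV hz) ⟨y2, hy2S, hy2U⟩ ⟨y1, hy1S, hy1V⟩
    obtain ⟨z, hzS, hzU, hzV⟩ := this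
    exact hdisj (x, z) hzS hzU hzV
  set C := Prod.fst '' (S \ U) with hCdef
  set D := Prod.fst '' (S \ V) with hDdef
  have hCc : IsClosed C := isClosedMap_fst_of_compactSpace _ (hclosed.sdiff hU)
  have hDc : IsClosed D := isClosedMap_fst_of_compactSpace _ (hclosed.sdiff hV)
  have hsub : Prod.fst '' S ⊆ Cᶜ ∪ Dᶜ := by
    rintro x ⟨⟨x', y⟩, hS', rfl⟩
    rcases key x' y hS' with hfib | hfib
    · left
      rintro ⟨⟨x'', z⟩, ⟨hzS, hznU⟩, rfl⟩
      exact hznU (hfib z hzS)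
    · right
      rintro ⟨⟨x'', z⟩, ⟨hzS, hznV⟩, rfl⟩
      exact hznV (hfib z hzS)
  have hne1 : (Prod.fst '' S ∩ Cᶜ).Nonempty := by
    refine ⟨a, ⟨(a, b), haS, rfl⟩, ?_⟩
    rintro ⟨⟨a', z⟩, ⟨hzS, hznU⟩, rfl⟩
    rcases key a' b haS with hfib | hfib
    · exact hznU (hfib z hzS)
    · exact hdisj (a', b) haS haU (hfib b haS)
  have hne2 : (Prod.fst '' S ∩ Dᶜ).Nonempty := by
    refine ⟨c, ⟨(c, d), hcS, rfl⟩, ?_⟩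
    rintro ⟨⟨c', z⟩, ⟨hzS, hznV⟩, rfl⟩
    rcases key c' d hcS with hfib | hfib
    · exact hdisj (c', d) hcS (hfib d hcS) hcV
    · exact hznV (hfib z hzS)
  obtain ⟨x, ⟨⟨x', y⟩, hS', rfl⟩, hxC, hxD⟩ :=
    hproj Cᶜ Dᶜ hCc.isOpen_compl hDc.isOpen_compl hsub hne1 hne2
  have hyU : (x', y) ∈ U := by
    by_contra hnU
    exact hxC ⟨(x', y), ⟨hS', hnU⟩, rfl⟩
  have hyV : (x', y) ∈ V := by
    by_contra hnV
    exact hxD ⟨(x', y), ⟨hS', hnV⟩, rfl⟩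
  exact hdisj (x', y) hS' hyU hyV
end

section
/- Let X be a topological space, let S, T ⊆ X × [0,1] with S connected, and assume for each x ∈ X the section T_x = {t ∈ [0,1] : (x,t) ∈ T} is connected, and for each t ∈ [0,1] the section T^t = {x ∈ X : (x,t) ∈ T} is open in X. Then at least one of the following holds: (a) the projection of T onto X is a proper subset of X; (b) the projection of S onto [0,1] is a proper subset of [0,1] and there exists t ∈ [0,1] such that (p_X(S) × {t}) ∩ T = ∅; (c) S ∩ T ≠ ∅. -/
theorem alternative_principle_open_sections
    {X : Type*} [TopologicalSpace X]
    (S T : Set (X × unitInterval))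
    (hS : IsPreconnected S)
    (hTx : ∀ x : X, IsPreconnected {t : unitInterval | (x, t) ∈ T})
    (hTt : ∀ t : unitInterval, IsOpen {x : X | (x, t) ∈ T}) :
    (Prod.fst '' T ≠ Set.univ) ∨
    ((Prod.snd '' S ≠ Set.univ) ∧ ∃ t : unitInterval, ∀ x ∈ Prod.fst '' S, (x, t) ∉ T) ∨
    (S ∩ T).Nonempty := by
  by_cases ha : Prod.fst '' T = Set.univ
  swap
  · exact Or.inl ha
  by_cases hc : (S ∩ T).Nonempty
  · exact Or.inr (Or.inr hc)
  right; left
  have hST : ∀ p ∈ S, p ∉ T := by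
    intro p hp hpT
    exact hc ⟨p, hp, hpT⟩
  set U : Set (X × unitInterval) := {p | ∃ s, p.2 < s ∧ (p.1, s) ∈ T} with hUdef
  set V : Set (X × unitInterval) := {p | ∃ s, s < p.2 ∧ (p.1, s) ∈ T} with hVdef
  have hU : IsOpen U := by
    have h : U = ⋃ s : unitInterval, {x | (x, s) ∈ T} ×ˢ Set.Iio s := by
      ext ⟨x, t⟩
      simp only [hUdef, Set.mem_setOf_eq, Set.mem_iUnion, Set.mem_prod, Set.mem_Iio]
      tauto
    rw [h]
    exact isOpen_iUnion fun s => (hTt s).prod isOpen_Iio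
  have hV : IsOpen V := by
    have h : V = ⋃ s : unitInterval, {x | (x, s) ∈ T} ×ˢ Set.Ioi s := by
      ext ⟨x, t⟩
      simp only [hVdef, Set.mem_setOf_eq, Set.mem_iUnion, Set.mem_prod, Set.mem_Ioi]
      tauto
    rw [h]
    exact isOpen_iUnion fun s => (hTt s).prod isOpen_Ioi
  have hcover : S ⊆ U ∪ V := by
    rintro ⟨x, t⟩ hxt
    have hx : x ∈ Prod.fst '' T := ha ▸ Set.mem_univ x
    obtain ⟨p, hpT, hp1⟩ := hx
    have hpT' : (x, p.2) ∈ T := by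
      rw [← hp1]; exact hpT
    rcases lt_trichotomy t p.2 with h | h | h
    · exact Or.inl ⟨p.2, h, hpT'⟩
    · exact absurd (h ▸ hpT') (hST _ hxt)
    · exact Or.inr ⟨p.2, h, hpT'⟩
  have hdisj : ¬ (S ∩ (U ∩ V)).Nonempty := by
    rintro ⟨⟨x, t⟩, hxtS, ⟨s2, hs2, hs2T⟩, ⟨s1, hs1, hs1T⟩⟩
    have hord : Set.OrdConnected {t : unitInterval | (x, t) ∈ T} :=
      (hTx x).ordConnected
    have : t ∈ {t : unitInterval | (x, t) ∈ T} :=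
      hord.out hs1T hs2T ⟨le_of_lt hs1, le_of_lt hs2⟩
    exact hST _ hxtS this
  have hcase : S ∩ V = ∅ ∨ S ∩ U = ∅ := by
    by_contra h
    push_neg at h
    exact hdisj (hS U V hU hV hcover h.2 h.1)
  rcases hcase with h | h
  · -- every point of S is below its fiber: 1 not in snd '' S, t := 0 works
    constructor
    · intro huniv
      have h1 : (1 : unitInterval) ∈ Prod.snd '' S := huniv ▸ Set.mem_univ _
      obtain ⟨p, hpS, hp2⟩ := h1
      rcases hcover hpS with ⟨s, hs, _⟩ | hmem
      · rw [hp2] at hs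
        exact absurd hs (not_lt.mpr (unitInterval.le_one s))
      · exact Set.eq_empty_iff_forall_notMem.mp h p ⟨hpS, hmem⟩
    · refine ⟨0, ?_⟩
      rintro x ⟨p, hpS, rfl⟩ h0T
      have hne : p.2 ≠ 0 := by
        intro h0
        exact hST p hpS (by rw [← Prod.mk.eta (p := p), h0]; exact h0T)
      have : p ∈ V := ⟨0, lt_of_le_of_ne (unitInterval.nonneg p.2) (Ne.symm hne), h0T⟩
      exact Set.eq_empty_iff_forall_notMem.mp h p ⟨hpS, this⟩
  · -- symmetric: every point of S is above its fiber: 0 not in snd '' S, t := 1 works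
    constructor
    · intro huniv
      have h0 : (0 : unitInterval) ∈ Prod.snd '' S := huniv ▸ Set.mem_univ _
      obtain ⟨p, hpS, hp2⟩ := h0
      rcases hcover hpS with hmem | ⟨s, hs, _⟩
      · exact Set.eq_empty_iff_forall_notMem.mp h p ⟨hpS, hmem⟩
      · rw [hp2] at hs
        exact absurd hs (not_lt.mpr (unitInterval.nonneg s))
    · refine ⟨1, ?_⟩
      rintro x ⟨p, hpS, rfl⟩ h1T
      have hne : p.2 ≠ 1 := by
        intro h1
        exact hST p hpS (by rw [← Prod.mk.eta (p := p), h1]; exact h1T)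
      have : p ∈ U := ⟨1, lt_of_le_of_ne (unitInterval.le_one p.2) hne, h1T⟩
      exact Set.eq_empty_iff_forall_notMem.mp h p ⟨hpS, this⟩
end

section
/- Let X be a topological space, let S, T ⊆ X × [0,1] with S connected and T closed, and assume for each x ∈ X the section T_x = {t ∈ [0,1] : (x,t) ∈ T} is connected. Then at least one of the following holds: (a) the projection of T onto X is a proper subset of X; (b) the projection of S onto [0,1] is a proper subset of [0,1] and there exists t ∈ [0,1] such that (p_X(S) × {t}) ∩ T = ∅; (c) S ∩ T ≠ ∅. -/
theorem alternative_principle_closed_T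
    {X : Type*} [TopologicalSpace X]
    (S T : Set (X × unitInterval))
    (hS : IsPreconnected S)
    (hTclosed : IsClosed T)
    (hTx : ∀ x : X, IsPreconnected {t : unitInterval | (x, t) ∈ T}) :
    (Prod.fst '' T ≠ Set.univ) ∨
    ((Prod.snd '' S ≠ Set.univ) ∧ ∃ t : unitInterval, ∀ x ∈ Prod.fst '' S, (x, t) ∉ T) ∨
    (S ∩ T).Nonempty := by
  by_cases ha : Prod.fst '' T = Set.univ
  · by_cases hc : (S ∩ T).Nonempty
    · exact Or.inr (Or.inr hc)
    · right; left
      have hne : ∀ x : X, ∃ s : unitInterval, (x, s) ∈ T := by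
        intro x
        have hx : x ∈ Prod.fst '' T := ha ▸ Set.mem_univ x
        obtain ⟨p, hp, rfl⟩ := hx
        exact ⟨p.2, hp⟩
      have hSnT : ∀ p ∈ S, p ∉ T := by
        intro p hp hpT
        exact hc ⟨p, hp, hpT⟩
      set U : Set (X × unitInterval) := {p | ∀ s ≤ p.2, (p.1, s) ∉ T} with hUdef
      set V : Set (X × unitInterval) := {p | ∀ s, p.2 ≤ s → (p.1, s) ∉ T} with hVdef
      have hUopen : IsOpen U := by
        rw [← isClosed_compl_iff]
        have : Uᶜ = Prod.fst ''
            {q : (X × unitInterval) × unitInterval | q.2 ≤ q.1.2 ∧ (q.1.1, q.2) ∈ T} := by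
          ext p
          simp only [Set.mem_compl_iff, hUdef, Set.mem_setOf_eq, Set.mem_image]
          constructor
          · intro h
            push_neg at h
            obtain ⟨s, hs1, hs2⟩ := h
            exact ⟨(p, s), ⟨hs1, hs2⟩, rfl⟩
          · rintro ⟨q, ⟨hs1, hs2⟩, rfl⟩
            push_neg
            exact ⟨q.2, hs1, hs2⟩
        rw [this]
        apply isClosedMap_fst_of_compactSpace
        exact (isClosed_le (by fun_prop) (by fun_prop)).inter
          (hTclosed.preimage (by fun_prop))
      have hVopen : IsOpen V := by
        rw [← isClosed_compl_iff]
        have : Vᶜ = Prod.fst ''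
            {q : (X × unitInterval) × unitInterval | q.1.2 ≤ q.2 ∧ (q.1.1, q.2) ∈ T} := by
          ext p
          simp only [Set.mem_compl_iff, hVdef, Set.mem_setOf_eq, Set.mem_image]
          constructor
          · intro h
            push_neg at h
            obtain ⟨s, hs1, hs2⟩ := h
            exact ⟨(p, s), ⟨hs1, hs2⟩, rfl⟩
          · rintro ⟨q, ⟨hs1, hs2⟩, rfl⟩
            push_neg
            exact ⟨q.2, hs1, hs2⟩
        rw [this]
        apply isClosedMap_fst_of_compactSpace
        exact (isClosed_le (by fun_prop) (by fun_prop)).inter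
          (hTclosed.preimage (by fun_prop))
      have hcover : S ⊆ U ∪ V := by
        intro p hp
        by_contra h
        simp only [Set.mem_union, not_or] at h
        obtain ⟨hU1, hV1⟩ := h
        simp only [hUdef, hVdef, Set.mem_setOf_eq] at hU1 hV1
        push_neg at hU1 hV1
        obtain ⟨s1, hs1le, hs1T⟩ := hU1
        obtain ⟨s2, hs2le, hs2T⟩ := hV1
        have := ((hTx p.1).ordConnected).out hs1T hs2T ⟨hs1le, hs2le⟩
        exact hSnT p hp this
      have hdisj : ¬(S ∩ (U ∩ V)).Nonempty := by
        rintro ⟨p, _, hpU, hpV⟩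
        obtain ⟨s, hs⟩ := hne p.1
        rcases le_total s p.2 with h | h
        · exact hpU s h hs
        · exact hpV s h hs
      have key := hS U V hUopen hVopen hcover
      by_cases hSU : (S ∩ U).Nonempty
      · by_cases hSV : (S ∩ V).Nonempty
        · exact absurd (key hSU hSV) hdisj
        · -- S ⊆ U
          have hsub : S ⊆ U := by
            intro p hp
            rcases hcover hp with h | h
            · exact h
            · exact absurd ⟨p, hp, h⟩ hSV
          constructor
          · intro heq
            have h1 : (1 : unitInterval) ∈ Prod.snd '' S := heq ▸ Set.mem_univ _
            obtain ⟨p, hp, hp2⟩ := h1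
            obtain ⟨s, hs⟩ := hne p.1
            exact hsub hp s (hp2 ▸ unitInterval.le_one s) hs
          · refine ⟨0, ?_⟩
            rintro x ⟨p, hp, rfl⟩
            exact hsub hp 0 p.2.2.1
      · -- S ⊆ V
        have hsub : S ⊆ V := by
          intro p hp
          rcases hcover hp with h | h
          · exact absurd ⟨p, hp, h⟩ hSU
          · exact h
        constructor
        · intro heq
          have h0 : (0 : unitInterval) ∈ Prod.snd '' S := heq ▸ Set.mem_univ _
          obtain ⟨p, hp, hp2⟩ := h0
          obtain ⟨s, hs⟩ := hne p.1
          exact hsub hp s (hp2 ▸ s.2.1) hs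
        · refine ⟨1, ?_⟩
          rintro x ⟨p, hp, rfl⟩
          exact hsub hp 1 (unitInterval.le_one p.2)
  · exact Or.inl ha
end

section
/- Let X be a topological space and let f : X × [0,1] → ℝ be a function. Assume: (i) for each x ∈ X, f(x,·) is upper semicontinuous on [0,1]; (ii) for each t ∈ [0,1], f(·,t) is lower semicontinuous on X; (iii) for each λ > sup_{t ∈ [0,1]} inf_{x ∈ X} f(x,t), each x₀ ∈ X and each t₀ ∈ [0,1], the sets {x ∈ X : f(x,t₀) ≤ λ} and {t ∈ [0,1] : f(x₀,t) > λ} are connected. Then sup_{t ∈ [0,1]} inf_{x ∈ X} f(x,t) = inf_{x ∈ X} sup_{t ∈ [0,1]} f(x,t). -/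
private lemma topological_minimax_key
    {X : Type*} [TopologicalSpace X]
    (f : X × unitInterval → ℝ)
    (husc : ∀ x : X, UpperSemicontinuous (fun t : unitInterval => f (x, t)))
    (hlsc : ∀ t : unitInterval, LowerSemicontinuous (fun x : X => f (x, t)))
    (hconn : ∀ l : ℝ, (⨆ t : unitInterval, ⨅ x : X, (f (x, t) : EReal)) < (l : EReal) →
      ∀ x₀ : X, ∀ t₀ : unitInterval,
        IsPreconnected {x : X | f (x, t₀) ≤ l} ∧
        IsPreconnected {t : unitInterval | l < f (x₀, t)})
    {l'' l' l : ℝ}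
    (h0 : (⨆ t : unitInterval, ⨅ x : X, (f (x, t) : EReal)) < (l'' : EReal))
    (h1 : l'' < l') (h2 : l' < l) :
    ∃ x : X, ∀ t : unitInterval, f (x, t) ≤ l := by
  by_contra hbad'
  push_neg at hbad'
  have hαl' : (⨆ t : unitInterval, ⨅ x : X, (f (x, t) : EReal)) < (l' : EReal) :=
    h0.trans (EReal.coe_lt_coe_iff.mpr h1)
  have hne : ∀ t : unitInterval, ∃ x : X, f (x, t) < l'' := by
    intro t
    have h3 : (⨅ x : X, (f (x, t) : EReal)) < (l'' : EReal) :=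
      lt_of_le_of_lt (le_iSup (fun t => ⨅ x : X, (f (x, t) : EReal)) t) h0
    obtain ⟨x, hx⟩ := iInf_lt_iff.mp h3
    exact ⟨x, EReal.coe_lt_coe_iff.mp hx⟩
  obtain ⟨x₀, -⟩ := hne 0
  set lft : X → unitInterval → Prop := fun x t => ∃ s, s < t ∧ l' < f (x, s) with hlftdef
  set rgt : X → unitInterval → Prop := fun x t => ∃ s, t < s ∧ l' < f (x, s) with hrgtdef
  -- every point of a sublevel set is of "left" or "right" type
  have hdich : ∀ x t, f (x, t) ≤ l' → lft x t ∨ rgt x t := by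
    intro x t hxt
    obtain ⟨s, hs⟩ := hbad' x
    have hs' : l' < f (x, s) := h2.trans hs
    rcases lt_trichotomy s t with h | h | h
    · exact Or.inl ⟨s, h, hs'⟩
    · rw [h] at hs'; exact absurd hs' (not_lt.mpr hxt)
    · exact Or.inr ⟨s, h, hs'⟩
  -- not both, using connectedness of superlevel sets in t
  have hexcl : ∀ x t, f (x, t) ≤ l' → lft x t → rgt x t → False := by
    rintro x t hxt ⟨s₁, hs₁, hf₁⟩ ⟨s₂, hs₂, hf₂⟩
    have hpc : IsPreconnected {s : unitInterval | l' < f (x, s)} := (hconn l' hαl' x t).2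
    have ht : t ∈ {s : unitInterval | l' < f (x, s)} :=
      hpc.ordConnected.out hf₁ hf₂ ⟨hs₁.le, hs₂.le⟩
    exact absurd ht (not_lt.mpr hxt)
  -- all points of a sublevel set share one type, by connectedness in x
  have huni : ∀ (t : unitInterval) (x y : X), f (x, t) ≤ l' → f (y, t) ≤ l' →
      lft x t → rgt y t → False := by
    rintro t x y hx hy ⟨sx, hsx, hfx⟩ ⟨sy, hsy, hfy⟩
    have hpc : IsPreconnected {x : X | f (x, t) ≤ l'} := (hconn l' hαl' x₀ t).1
    set u : Set X := ⋃ s ∈ {s : unitInterval | s < t}, {x : X | l' < f (x, s)} with hu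
    set v : Set X := ⋃ s ∈ {s : unitInterval | t < s}, {x : X | l' < f (x, s)} with hv
    have hou : IsOpen u := isOpen_biUnion fun s _ =>
      lowerSemicontinuous_iff_isOpen_preimage.mp (hlsc s) l'
    have hov : IsOpen v := isOpen_biUnion fun s _ =>
      lowerSemicontinuous_iff_isOpen_preimage.mp (hlsc s) l'
    have hsub : {x : X | f (x, t) ≤ l'} ⊆ u ∪ v := by
      intro z hz
      rcases hdich z t hz with ⟨s, hs, hf⟩ | ⟨s, hs, hf⟩
      · exact Or.inl (Set.mem_biUnion hs hf)
      · exact Or.inr (Set.mem_biUnion hs hf)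
    obtain ⟨z, hz1, hz2, hz3⟩ := hpc u v hou hov hsub
      ⟨x, hx, Set.mem_biUnion hsx hfx⟩ ⟨y, hy, Set.mem_biUnion hsy hfy⟩
    obtain ⟨s, hs, hf⟩ := Set.mem_iUnion₂.mp hz2
    obtain ⟨s', hs', hf'⟩ := Set.mem_iUnion₂.mp hz3
    exact hexcl z t hz1 ⟨s, hs, hf⟩ ⟨s', hs', hf'⟩
  set R : Set unitInterval := {t | ∃ x, f (x, t) ≤ l' ∧ ¬ lft x t} with hRdef
  set L : Set unitInterval := {t | ∃ x, f (x, t) ≤ l' ∧ ¬ rgt x t} with hLdef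
  have hRL : ∀ t, t ∈ R → t ∈ L → False := by
    rintro t ⟨x, hx, hxl⟩ ⟨y, hy, hyr⟩
    have hxr : rgt x t := (hdich x t hx).resolve_left hxl
    have hyl : lft y t := (hdich y t hy).resolve_right hyr
    exact huni t y x hy hx hyl hxr
  have hcov : ∀ t, t ∈ R ∨ t ∈ L := by
    intro t
    obtain ⟨x, hx⟩ := hne t
    have hx' : f (x, t) ≤ l' := (hx.trans h1).le
    by_cases hl : lft x t
    · exact Or.inr ⟨x, hx', fun hr => hexcl x t hx' hl hr⟩
    · exact Or.inl ⟨x, hx', hl⟩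
  have hRdown : ∀ t ∈ R, ∀ t', t' ≤ t → t' ∈ R := by
    rintro t ⟨x, hx, hxl⟩ t' ht'
    rcases eq_or_lt_of_le ht' with rfl | ht'
    · exact ⟨x, hx, hxl⟩
    · refine ⟨x, ?_, ?_⟩
      · by_contra hgt
        push_neg at hgt
        exact hxl ⟨t', ht', hgt⟩
      · rintro ⟨s, hs, hf⟩
        exact hxl ⟨s, hs.trans ht', hf⟩
  have h0R : (0 : unitInterval) ∈ R := by
    obtain ⟨x, hx⟩ := hne 0
    exact ⟨x, (hx.trans h1).le, fun ⟨s, hs, _⟩ => absurd hs (not_lt.mpr s.2.1)⟩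
  have h1L : (1 : unitInterval) ∈ L := by
    obtain ⟨x, hx⟩ := hne 1
    exact ⟨x, (hx.trans h1).le, fun ⟨s, hs, _⟩ => absurd hs (not_lt.mpr s.2.2)⟩
  have hRne : (Subtype.val '' R).Nonempty := ⟨0, 0, h0R, rfl⟩
  have hbdd : BddAbove (Subtype.val '' R) := by
    refine ⟨1, ?_⟩
    rintro r ⟨t, _, rfl⟩
    exact t.2.2
  set cr : ℝ := sSup (Subtype.val '' R) with hcrdef
  have hcr0 : 0 ≤ cr := le_csSup hbdd ⟨0, h0R, rfl⟩
  have hcr1 : cr ≤ 1 := by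
    refine csSup_le hRne ?_
    rintro r ⟨t, _, rfl⟩
    exact t.2.2
  set c : unitInterval := ⟨cr, hcr0, hcr1⟩ with hcdef
  have hcub : ∀ t ∈ R, t ≤ c := fun t ht =>
    show (t : ℝ) ≤ cr from le_csSup hbdd ⟨t, ht, rfl⟩
  obtain ⟨x, hxc⟩ := hne c
  have hxc' : f (x, c) ≤ l' := (hxc.trans h1).le
  have hUo : IsOpen {s : unitInterval | f (x, s) < l'} :=
    upperSemicontinuous_iff_isOpen_preimage.mp (husc x) l'
  have hUnh : {s : unitInterval | f (x, s) < l'} ∈ nhds c :=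
    hUo.mem_nhds (show f (x, c) < l' from hxc.trans h1)
  obtain ⟨ε, hε, hball⟩ := Metric.mem_nhds_iff.mp hUnh
  have hU : ∀ s : unitInterval, |(s : ℝ) - cr| < ε → f (x, s) < l' := by
    intro s hs
    exact hball (by simpa [Metric.mem_ball, Subtype.dist_eq, Real.dist_eq] using hs)
  obtain ⟨s₀, hs₀⟩ := hbad' x
  have hs₀' : l' < f (x, s₀) := h2.trans hs₀
  rcases hcov c with hcR | hcL
  · -- c ∈ R
    have hc1 : cr < 1 := by
      rcases lt_or_eq_of_le hcr1 with h | h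
      · exact h
      · exact absurd h1L (fun h1L' => hRL c hcR (by rwa [show c = 1 from Subtype.ext h]))
    set t'r : ℝ := min (cr + ε / 2) 1 with ht'rdef
    have ht'r0 : 0 ≤ t'r := le_min (by linarith) zero_le_one
    have ht'r1 : t'r ≤ 1 := min_le_right _ _
    set t' : unitInterval := ⟨t'r, ht'r0, ht'r1⟩ with ht'def
    have hct' : c < t' := show cr < t'r from lt_min (by linarith) hc1
    have ht'L : t' ∈ L :=
      (hcov t').resolve_left fun h => absurd (hcub t' h) (not_le.mpr hct')
    have hmid : ∀ s : unitInterval, c ≤ s → s ≤ t' → f (x, s) < l' := by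
      intro s h1s h2s
      have h1s' : cr ≤ (s : ℝ) := h1s
      have h2s' : (s : ℝ) ≤ t'r := h2s
      have : (s : ℝ) ≤ cr + ε / 2 := h2s'.trans (min_le_left _ _)
      exact hU s (abs_lt.mpr ⟨by linarith, by linarith⟩)
    have hxt' : f (x, t') ≤ l' := (hmid t' hct'.le le_rfl).le
    obtain ⟨y, hy, hyr⟩ := ht'L
    have hyl : lft y t' := (hdich y t' hy).resolve_right hyr
    have hxnr : ¬ rgt x t' := fun hr => huni t' y x hy hxt' hyl hr
    obtain ⟨z, hz, hzl⟩ := hcR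
    have hzr : rgt z c := (hdich z c hz).resolve_left hzl
    have hxnl : ¬ lft x c := fun hl => huni c x z hxc' hz hl hzr
    rcases lt_or_ge s₀ c with h | h
    · exact hxnl ⟨s₀, h, hs₀'⟩
    rcases le_or_gt s₀ t' with h' | h'
    · exact absurd hs₀' (not_lt.mpr (hmid s₀ h h').le)
    · exact hxnr ⟨s₀, h', hs₀'⟩
  · -- c ∈ L
    have hc0 : 0 < cr := by
      rcases lt_or_eq_of_le hcr0 with h | h
      · exact h
      · exact absurd hcL (fun hcL' => hRL 0 h0R (by rwa [show (0:unitInterval) = c from Subtype.ext h]))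
    set t'r : ℝ := max (cr - ε / 2) 0 with ht'rdef
    have ht'r0 : 0 ≤ t'r := le_max_right _ _
    have ht'r1 : t'r ≤ 1 := max_le (by linarith) zero_le_one
    set t' : unitInterval := ⟨t'r, ht'r0, ht'r1⟩ with ht'def
    have ht'c : t' < c := show t'r < cr from max_lt (by linarith) hc0
    have ht'R : t' ∈ R := by
      obtain ⟨r, ⟨u, huR, rfl⟩, hru⟩ := exists_lt_of_lt_csSup hRne (show t'r < cr from ht'c)
      exact hRdown u huR t' (show (t' : ℝ) ≤ (u : ℝ) from hru.le)
    have hmid : ∀ s : unitInterval, t' ≤ s → s ≤ c → f (x, s) < l' := by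
      intro s h1s h2s
      have h1s' : t'r ≤ (s : ℝ) := h1s
      have h2s' : (s : ℝ) ≤ cr := h2s
      have : cr - ε / 2 ≤ (s : ℝ) := (le_max_left _ _).trans h1s'
      exact hU s (abs_lt.mpr ⟨by linarith, by linarith⟩)
    have hxt' : f (x, t') ≤ l' := (hmid t' le_rfl ht'c.le).le
    obtain ⟨z, hz, hzl⟩ := ht'R
    have hzr : rgt z t' := (hdich z t' hz).resolve_left hzl
    have hxnl : ¬ lft x t' := fun hl => huni t' x z hxt' hz hl hzr
    obtain ⟨y, hy, hyr⟩ := hcL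
    have hyl : lft y c := (hdich y c hy).resolve_right hyr
    have hxnr : ¬ rgt x c := fun hr => huni c y x hy hxc' hyl hr
    rcases lt_or_ge s₀ t' with h | h
    · exact hxnl ⟨s₀, h, hs₀'⟩
    rcases le_or_gt s₀ c with h' | h'
    · exact absurd hs₀' (not_lt.mpr (hmid s₀ h h').le)
    · exact hxnr ⟨s₀, h', hs₀'⟩

theorem topological_minimax_semicontinuous
    {X : Type*} [TopologicalSpace X]
    (f : X × unitInterval → ℝ)
    (husc : ∀ x : X, UpperSemicontinuous (fun t : unitInterval => f (x, t)))
    (hlsc : ∀ t : unitInterval, LowerSemicontinuous (fun x : X => f (x, t)))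
    (hconn : ∀ l : ℝ, (⨆ t : unitInterval, ⨅ x : X, (f (x, t) : EReal)) < (l : EReal) →
      ∀ x₀ : X, ∀ t₀ : unitInterval,
        IsPreconnected {x : X | f (x, t₀) ≤ l} ∧
        IsPreconnected {t : unitInterval | l < f (x₀, t)}) :
    (⨆ t : unitInterval, ⨅ x : X, (f (x, t) : EReal)) =
      ⨅ x : X, ⨆ t : unitInterval, (f (x, t) : EReal) := by
  have hle : (⨆ t : unitInterval, ⨅ x : X, (f (x, t) : EReal)) ≤
      ⨅ x : X, ⨆ t : unitInterval, (f (x, t) : EReal) :=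
    iSup_le fun t => le_iInf fun x =>
      le_trans (iInf_le _ x) (le_iSup (fun t : unitInterval => (f (x, t) : EReal)) t)
  refine le_antisymm hle (not_lt.mp fun hlt => ?_)
  obtain ⟨l, hl1, hl2⟩ := EReal.exists_between_coe_real hlt
  obtain ⟨m, hm1, hm2⟩ := EReal.exists_between_coe_real hl1
  have hm2' : m < l := EReal.coe_lt_coe_iff.mp hm2
  obtain ⟨x, hx⟩ := topological_minimax_key f husc hlsc hconn
    (l'' := m) (l' := (m + l) / 2) (l := l) hm1 (by linarith) (by linarith)
  have hfin : (⨅ x : X, ⨆ t : unitInterval, (f (x, t) : EReal)) ≤ (l : EReal) :=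
    le_trans (iInf_le _ x) (iSup_le fun t => EReal.coe_le_coe_iff.mpr (hx t))
  exact absurd hl2 (not_lt.mpr hfin)
end

section
/- Let X be a compact topological space and let f : X × [0,1] → ℝ be lower semicontinuous on X × [0,1]. Assume that for each λ > sup_{t ∈ [0,1]} inf_{x ∈ X} f(x,t), each x₀ ∈ X and each t₀ ∈ [0,1], the sets {x ∈ X : f(x,t₀) ≤ λ} and {t ∈ [0,1] : f(x₀,t) > λ} are connected. Then sup_{t ∈ [0,1]} inf_{x ∈ X} f(x,t) = inf_{x ∈ X} sup_{t ∈ [0,1]} f(x,t). -/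
/-!
Fix a real `l` strictly between the two sides and put `Z = {f ≤ l}`, a closed subset of
`X × [0,1]` whose sections `Z_t` are nonempty and preconnected, and whose complement meets each
`{x} × [0,1]` in an interval. Hence every `x ∈ Z_t` stays in `Z` on all of `[0,t]` or on all of
`[t,1]`. The parameters `t` admitting a point of the first, resp. second, kind form two closed sets
(images of closed sets under the closed projection `X × [0,1] → [0,1]`) covering `[0,1]` and
containing `0`, resp. `1`, so they meet at some `τ`. Then `Z_τ` is covered by two nonempty closed
sets, which meet by preconnectedness: a point of the intersection lies in every `Z_t`, so
`inf_x sup_t f ≤ l`, a contradiction.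
-/

open Set Filter Topology

section ClosedRelation

variable {X T : Type*} [TopologicalSpace X] [TopologicalSpace T] [LinearOrder T]

theorem isClosed_setOf_forall_le_mem [ClosedIicTopology T] {Z : Set (X × T)} (hZ : IsClosed Z) :
    IsClosed {p : X × T | ∀ s ≤ p.2, (p.1, s) ∈ Z} := by
  refine isOpen_compl_iff.mp (isOpen_iff_eventually.mpr ?_)
  rintro ⟨x, t⟩ hp
  simp only [mem_compl_iff, mem_ofPred_eq, not_forall] at hp
  obtain ⟨s, hst, hs⟩ := hp
  rcases hst.lt_or_eq with hst | rfl
  · have hsection : ContinuousAt (fun q : X × T => (q.1, s)) (x, t) := by fun_prop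
    have hnear : ∀ᶠ q : X × T in 𝓝 (x, t), (q.1, s) ∉ Z :=
      hsection.preimage_mem_nhds (hZ.isOpen_compl.mem_nhds hs)
    have hright : ∀ᶠ q : X × T in 𝓝 (x, t), s < q.2 :=
      continuous_snd.continuousAt.eventually (Ioi_mem_nhds hst)
    filter_upwards [hnear, hright] with q hqZ hsq hq using hqZ (hq s hsq.le)
  · filter_upwards [hZ.isOpen_compl.mem_nhds hs] with q hqZ hq using hqZ (hq q.2 le_rfl)

theorem isClosed_setOf_forall_ge_mem [ClosedIciTopology T] {Z : Set (X × T)} (hZ : IsClosed Z) :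
    IsClosed {p : X × T | ∀ s ≥ p.2, (p.1, s) ∈ Z} :=
  isClosed_setOf_forall_le_mem (T := Tᵒᵈ) hZ

end ClosedRelation

theorem Set.Iic_subset_or_Ici_subset_of_ordConnected_compl {T : Type*} [LinearOrder T]
    {S : Set T} (hS : Sᶜ.OrdConnected) {t : T} (ht : t ∈ S) : Iic t ⊆ S ∨ Ici t ⊆ S := by
  by_contra! h
  obtain ⟨a, hat, ha⟩ := not_subset.mp h.1
  obtain ⟨b, htb, hb⟩ := not_subset.mp h.2
  exact hS.out ha hb ⟨hat, htb⟩ ht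

theorem IsClosed.exists_forall_mem_of_isPreconnected {X T : Type*} [TopologicalSpace X]
    [CompactSpace X] [TopologicalSpace T] [LinearOrder T] [OrderClosedTopology T]
    [PreconnectedSpace T] [BoundedOrder T] {Z : Set (X × T)} (hZ : IsClosed Z)
    (hne : ∀ t, ∃ x, (x, t) ∈ Z) (hconn : ∀ t, IsPreconnected {x | (x, t) ∈ Z})
    (hord : ∀ x, {t | (x, t) ∉ Z}.OrdConnected) : ∃ x, ∀ t, (x, t) ∈ Z := by
  set R := {p : X × T | ∀ s ≤ p.2, (p.1, s) ∈ Z}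
  set L := {p : X × T | ∀ s ≥ p.2, (p.1, s) ∈ Z}
  have hsplit : ∀ p ∈ Z, p ∈ R ∪ L := fun p hp =>
    Iic_subset_or_Ici_subset_of_ordConnected_compl (S := {s | (p.1, s) ∈ Z}) (hord p.1) hp
  have hcover : univ ⊆ Prod.snd '' R ∪ Prod.snd '' L := fun t _ => by
    obtain ⟨x, hx⟩ := hne t
    exact (hsplit _ hx).imp (mem_image_of_mem _) (mem_image_of_mem _)
  have hbot : ⊥ ∈ Prod.snd '' R := by
    obtain ⟨x, hx⟩ := hne ⊥
    exact ⟨(x, ⊥), fun s hs => le_bot_iff.mp hs ▸ hx, rfl⟩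
  have htop : ⊤ ∈ Prod.snd '' L := by
    obtain ⟨x, hx⟩ := hne ⊤
    exact ⟨(x, ⊤), fun s hs => top_le_iff.mp hs ▸ hx, rfl⟩
  obtain ⟨t, ⟨a, haR⟩, ⟨b, hbL⟩⟩ :
      ∃ t, (∃ a, (a, t) ∈ R) ∧ ∃ b, (b, t) ∈ L := by
    obtain ⟨t, -, ⟨⟨a, _⟩, haR, rfl⟩, ⟨⟨b, _⟩, hbL, rfl⟩⟩ :=
      isPreconnected_closed_iff.mp isPreconnected_univ _ _
        (isClosedMap_snd_of_compactSpace _ (isClosed_setOf_forall_le_mem hZ))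
        (isClosedMap_snd_of_compactSpace _ (isClosed_setOf_forall_ge_mem hZ)) hcover
        ⟨⊥, trivial, hbot⟩ ⟨⊤, trivial, htop⟩
    exact ⟨_, ⟨a, haR⟩, ⟨b, hbL⟩⟩
  have hsection : Continuous fun x : X => (x, t) := continuous_id.prodMk continuous_const
  obtain ⟨x, -, hxR, hxL⟩ := isPreconnected_closed_iff.mp (hconn t) {x | (x, t) ∈ R}
    {x | (x, t) ∈ L} ((isClosed_setOf_forall_le_mem hZ).preimage hsection)
    ((isClosed_setOf_forall_ge_mem hZ).preimage hsection) (fun x hx => hsplit _ hx)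
    ⟨a, haR t le_rfl, haR⟩ ⟨b, hbL t le_rfl, hbL⟩
  exact ⟨x, fun s => (le_total s t).elim (hxR s) (hxL s)⟩

theorem topological_minimax_compact_lsc
    {X : Type*} [TopologicalSpace X] [CompactSpace X]
    (f : X × unitInterval → ℝ)
    (hlsc : LowerSemicontinuous f)
    (hconn : ∀ l : ℝ, (⨆ t : unitInterval, ⨅ x : X, (f (x, t) : EReal)) < (l : EReal) →
      ∀ x₀ : X, ∀ t₀ : unitInterval,
        IsPreconnected {x : X | f (x, t₀) ≤ l} ∧
        IsPreconnected {t : unitInterval | l < f (x₀, t)}) :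
    (⨆ t : unitInterval, ⨅ x : X, (f (x, t) : EReal)) =
      ⨅ x : X, ⨆ t : unitInterval, (f (x, t) : EReal) := by
  refine le_antisymm (iSup_iInf_le_iInf_iSup _) (not_lt.mp fun hlt => ?_)
  obtain ⟨l, hl_lt, hlt_l⟩ := EReal.lt_iff_exists_real_btwn.mp hlt
  have hne : ∀ t, ∃ x, f (x, t) ≤ l := fun t => by
    obtain ⟨x, hx⟩ :=
      iInf_lt_iff.mp ((le_iSup (fun t ↦ ⨅ x : X, (f (x, t) : EReal)) t).trans_lt hl_lt)
    exact ⟨x, (EReal.coe_lt_coe_iff.mp hx).le⟩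
  obtain ⟨x₀, -⟩ := hne 0
  have hord : ∀ x, {t | (x, t) ∉ f ⁻¹' Iic l}.OrdConnected := fun x => by
    simpa only [mem_preimage, mem_Iic, not_le] using (hconn l hl_lt x 0).2.ordConnected
  obtain ⟨x, hx⟩ := (hlsc.isClosed_preimage l).exists_forall_mem_of_isPreconnected hne
    (fun t => (hconn l hl_lt x₀ t).1) hord
  exact hlt_l.not_ge ((iInf_le _ x).trans (iSup_le fun t => EReal.coe_le_coe_iff.mpr (hx t)))
end

section
/- Let X and Y be real Banach spaces, Φ : X → Y a continuous linear surjective operator, and set α_Φ = sup over y in the closed unit ball of Y of dist(0, Φ⁻¹(y)). Let Ψ : X → Y be Lipschitz with constant L < 1/α_Φ. Then for every y ∈ Y, the set (Φ + Ψ)⁻¹(y) is non-empty. -/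
theorem surjectivity_of_linear_plus_lipschitz_perturbation
    {X Y : Type*} [NormedAddCommGroup X] [NormedSpace ℝ X] [CompleteSpace X]
    [NormedAddCommGroup Y] [NormedSpace ℝ Y] [CompleteSpace Y]
    (Φ : X →L[ℝ] Y) (hΦ : Function.Surjective Φ)
    (Ψ : X → Y) (L : NNReal) (hΨ : LipschitzWith L Ψ)
    (hL : (L : ℝ) <
      1 / (⨆ y : Metric.closedBall (0 : Y) 1, Metric.infDist 0 (Φ ⁻¹' {(y : Y)}))) :
    ∀ y : Y, ∃ x : X, Φ x + Ψ x = y := by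
  intro y
  set α := (⨆ y : Metric.closedBall (0 : Y) 1, Metric.infDist 0 (Φ ⁻¹' {(y : Y)})) with hα
  by_cases hαpos : 0 < α
  swap
  · exfalso
    push_neg at hαpos
    have h1 : (1 : ℝ) / α ≤ 0 := one_div_nonpos.mpr hαpos
    exact absurd (hL.trans_le h1) (not_lt.mpr L.coe_nonneg)
  have hLα : (L : ℝ) * α < 1 := (lt_div_iff₀ hαpos).mp hL
  have hbdd : BddAbove (Set.range fun y : Metric.closedBall (0 : Y) 1 =>
      Metric.infDist 0 (Φ ⁻¹' {(y : Y)})) := by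
    by_contra h
    have : α = 0 := hα.trans (Real.iSup_of_not_bddAbove h)
    exact absurd this (ne_of_gt hαpos)
  obtain ⟨C, hCα, hq⟩ : ∃ C : ℝ, α < C ∧ (L : ℝ) * C < 1 := by
    rcases eq_or_lt_of_le L.coe_nonneg with h0 | h0
    · exact ⟨α + 1, by linarith, by rw [← h0, zero_mul]; norm_num⟩
    · refine ⟨(α + 1 / L) / 2, ?_, ?_⟩
      · have hα1L : α < 1 / (L : ℝ) := by
          rw [lt_div_iff₀ h0]
          nlinarith
        linarith
      · have : (L : ℝ) * ((α + 1 / L) / 2) = ((L : ℝ) * α + 1) / 2 := by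
          field_simp
        rw [this]
        linarith
  have hCpos : 0 < C := hαpos.trans hCα
  -- key selection lemma
  have key : ∀ z : Y, ∃ x : X, Φ x = z ∧ ‖x‖ ≤ C * ‖z‖ := by
    intro z
    rcases eq_or_ne z 0 with rfl | hz
    · exact ⟨0, by simp, by simp⟩
    · have hzn : (0 : ℝ) < ‖z‖ := norm_pos_iff.mpr hz
      set w : Y := ‖z‖⁻¹ • z with hw
      have hwmem : w ∈ Metric.closedBall (0 : Y) 1 := by
        rw [Metric.mem_closedBall, dist_zero_right, hw, norm_smul, norm_inv,
          norm_norm, inv_mul_cancel₀ (ne_of_gt hzn)]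
      have hsup : Metric.infDist 0 (Φ ⁻¹' {w}) ≤ α := by
        rw [hα]
        exact le_ciSup hbdd (⟨w, hwmem⟩ : Metric.closedBall (0 : Y) 1)
      obtain ⟨x0, hx0⟩ := hΦ w
      have hne : (Φ ⁻¹' {w}).Nonempty := ⟨x0, hx0⟩
      have hlt : Metric.infDist 0 (Φ ⁻¹' {w}) < C := lt_of_le_of_lt hsup hCα
      obtain ⟨x, hxmem, hxd⟩ := (Metric.infDist_lt_iff hne).mp hlt
      have hxn : ‖x‖ < C := by rwa [dist_zero_left] at hxd
      refine ⟨‖z‖ • x, ?_, ?_⟩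
      · rw [map_smul, hxmem]
        simp only [hw]
        rw [smul_smul, mul_inv_cancel₀ (ne_of_gt hzn), one_smul]
      · rw [norm_smul, norm_norm, mul_comm]
        exact mul_le_mul_of_nonneg_right hxn.le hzn.le
  choose T hT1 hT2 using key
  set F : X → Y := fun x => y - Φ x - Ψ x with hF
  set g : X → X := fun x => x + T (F x) with hg
  have hres : ∀ x, F (g x) = Ψ x - Ψ (g x) := by
    intro x
    simp only [hF, hg, map_add, hT1]
    abel
  set q : ℝ := (L : ℝ) * C with hqdef
  have hq0 : 0 ≤ q := mul_nonneg L.coe_nonneg hCpos.le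
  have hresn : ∀ x, ‖F (g x)‖ ≤ q * ‖F x‖ := by
    intro x
    rw [hres x]
    have h1 : ‖Ψ x - Ψ (g x)‖ ≤ (L : ℝ) * ‖x - g x‖ := by
      have := hΨ.dist_le_mul x (g x)
      rwa [dist_eq_norm, dist_eq_norm] at this
    have h2 : ‖x - g x‖ = ‖T (F x)‖ := by
      simp only [hg]
      rw [show x - (x + T (F x)) = -(T (F x)) by abel, norm_neg]
    calc ‖Ψ x - Ψ (g x)‖ ≤ (L : ℝ) * ‖T (F x)‖ := by rw [← h2]; exact h1
      _ ≤ (L : ℝ) * (C * ‖F x‖) :=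
        mul_le_mul_of_nonneg_left (hT2 _) L.coe_nonneg
      _ = q * ‖F x‖ := by ring
  set u : ℕ → X := fun n => g^[n] 0 with hu
  have hu_succ : ∀ n, u (n + 1) = g (u n) := by
    intro n; simp only [hu, Function.iterate_succ_apply']
  set M : ℝ := ‖F (0 : X)‖ with hM
  have hMnonneg : 0 ≤ M := norm_nonneg _
  have hFn : ∀ n, ‖F (u n)‖ ≤ q ^ n * M := by
    intro n
    induction n with
    | zero => simp [hu, hM]
    | succ n ih =>
      rw [hu_succ]
      calc ‖F (g (u n))‖ ≤ q * ‖F (u n)‖ := hresn _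
        _ ≤ q * (q ^ n * M) := mul_le_mul_of_nonneg_left ih hq0
        _ = q ^ (n + 1) * M := by ring
  have hdist : ∀ n, dist (u n) (u (n + 1)) ≤ (C * M) * q ^ n := by
    intro n
    rw [hu_succ, dist_eq_norm]
    have h2 : u n - g (u n) = -(T (F (u n))) := by simp only [hg]; abel
    rw [h2, norm_neg]
    calc ‖T (F (u n))‖ ≤ C * ‖F (u n)‖ := hT2 _
      _ ≤ C * (q ^ n * M) := mul_le_mul_of_nonneg_left (hFn n) hCpos.le
      _ = (C * M) * q ^ n := by ring
  have hcauchy : CauchySeq u := cauchySeq_of_le_geometric q (C * M) hq hdist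
  obtain ⟨x, hx⟩ := cauchySeq_tendsto_of_complete hcauchy
  have hFcont : Continuous F := by
    simp only [hF]
    exact (continuous_const.sub Φ.continuous).sub hΨ.continuous
  have h1 : Filter.Tendsto (fun n => F (u n)) Filter.atTop (nhds (F x)) :=
    (hFcont.tendsto x).comp hx
  have h2 : Filter.Tendsto (fun n => ‖F (u n)‖) Filter.atTop (nhds 0) := by
    have hgeo : Filter.Tendsto (fun n => q ^ n * M) Filter.atTop (nhds 0) := by
      have := (tendsto_pow_atTop_nhds_zero_of_lt_one hq0 hq).mul_const M
      simpa using this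
    exact squeeze_zero (fun n => norm_nonneg _) hFn hgeo
  have h3 : Filter.Tendsto (fun n => ‖F (u n)‖) Filter.atTop (nhds ‖F x‖) :=
    h1.norm
  have h4 : ‖F x‖ = 0 := tendsto_nhds_unique h3 h2
  have h5 : F x = 0 := norm_eq_zero.mp h4
  refine ⟨x, ?_⟩
  have h6 : y - Φ x - Ψ x = 0 := h5
  have h7 : Φ x + Ψ x - y = 0 := by
    rw [show Φ x + Ψ x - y = -(y - Φ x - Ψ x) by abel, h6, neg_zero]
  exact sub_eq_zero.mp h7
end

section
/- Let X and Y be real Banach spaces, Φ : X → Y a continuous linear surjective operator with α_Φ = sup_{‖y‖ ≤ 1} dist(0, Φ⁻¹(y)), and Ψ : X → Y Lipschitz with constant L < 1/α_Φ. Then the multifunction y ↦ (Φ + Ψ)⁻¹(y) is Lipschitzian with respect to the Hausdorff distance, with Lipschitz constant α_Φ/(1 − L·α_Φ); that is, for all y₁, y₂ ∈ Y, the Hausdorff distance between (Φ+Ψ)⁻¹(y₁) and (Φ+Ψ)⁻¹(y₂) is at most (α_Φ/(1 − L·α_Φ))·‖y₁ − y₂‖. -/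
open Metric Filter Topology

/-- Key perturbation lemma: if `Φ` has a right inverse with linear norm bound `α` and
`Ψ` is `L`-Lipschitz with `L * α < 1`, then from any starting point `x₁` one can find a
solution of `Φ x + Ψ x = y₂` at controlled distance. -/
lemma key_perturb {X Y : Type*} [NormedAddCommGroup X] [NormedSpace ℝ X] [CompleteSpace X]
    [NormedAddCommGroup Y] [NormedSpace ℝ Y]
    (Φ : X →L[ℝ] Y) (Ψ : X → Y) (L : NNReal) (hΨ : LipschitzWith L Ψ)
    (α : ℝ) (hα0 : 0 ≤ α) (hinv : ∀ z : Y, ∃ x, Φ x = z ∧ ‖x‖ ≤ α * ‖z‖)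
    (hLα : (L : ℝ) * α < 1) (y₂ : Y) (x₁ : X) :
    ∃ x₂ : X, Φ x₂ + Ψ x₂ = y₂ ∧
      dist x₁ x₂ ≤ (α / (1 - (L : ℝ) * α)) * ‖y₂ - (Φ x₁ + Ψ x₁)‖ := by
  classical
  set g : Y → X := fun z => Classical.choose (hinv z) with hg
  have hg1 : ∀ z, Φ (g z) = z := fun z => (Classical.choose_spec (hinv z)).1
  have hg2 : ∀ z, ‖g z‖ ≤ α * ‖z‖ := fun z => (Classical.choose_spec (hinv z)).2
  set F : X → Y := fun x => Φ x + Ψ x with hF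
  -- iterative sequence
  let u : ℕ → X := fun n => Nat.rec x₁ (fun _ un => un + g (y₂ - F un)) n
  have hu0 : u 0 = x₁ := rfl
  have hus : ∀ n, u (n + 1) = u n + g (y₂ - F (u n)) := fun n => rfl
  set r : ℝ := (L : ℝ) * α with hr
  have hr0 : 0 ≤ r := mul_nonneg L.coe_nonneg hα0
  -- step estimate
  have hstep : ∀ n, ‖y₂ - F (u (n + 1))‖ ≤ r * ‖y₂ - F (u n)‖ := by
    intro n
    have hΦ1 : Φ (u (n + 1)) = Φ (u n) + (y₂ - F (u n)) := by
      rw [hus n, map_add, hg1]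
    have : y₂ - F (u (n + 1)) = Ψ (u n) - Ψ (u (n + 1)) := by
      simp only [hF, hΦ1]
      abel
    rw [this]
    calc ‖Ψ (u n) - Ψ (u (n + 1))‖ ≤ (L : ℝ) * ‖u n - u (n + 1)‖ := by
          have := hΨ.dist_le_mul (u n) (u (n + 1))
          simpa [dist_eq_norm] using this
      _ ≤ (L : ℝ) * (α * ‖y₂ - F (u n)‖) := by
          apply mul_le_mul_of_nonneg_left _ L.coe_nonneg
          rw [hus n]
          simpa using hg2 (y₂ - F (u n))
      _ = r * ‖y₂ - F (u n)‖ := by ring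
  have hgeo : ∀ n, ‖y₂ - F (u n)‖ ≤ r ^ n * ‖y₂ - F x₁‖ := by
    intro n
    induction n with
    | zero => simp [hu0]
    | succ n ih =>
      calc ‖y₂ - F (u (n + 1))‖ ≤ r * ‖y₂ - F (u n)‖ := hstep n
        _ ≤ r * (r ^ n * ‖y₂ - F x₁‖) := mul_le_mul_of_nonneg_left ih hr0
        _ = r ^ (n + 1) * ‖y₂ - F x₁‖ := by ring
  set C : ℝ := α * ‖y₂ - F x₁‖ with hC
  have hdistu : ∀ n, dist (u n) (u (n + 1)) ≤ C * r ^ n := by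
    intro n
    rw [hus n, dist_eq_norm]
    simp only [sub_add_cancel_left, norm_neg]
    calc ‖g (y₂ - F (u n))‖ ≤ α * ‖y₂ - F (u n)‖ := hg2 _
      _ ≤ α * (r ^ n * ‖y₂ - F x₁‖) := mul_le_mul_of_nonneg_left (hgeo n) hα0
      _ = C * r ^ n := by ring
  have hcauchy : CauchySeq u := cauchySeq_of_le_geometric r C hLα hdistu
  obtain ⟨a, ha⟩ := cauchySeq_tendsto_of_complete hcauchy
  refine ⟨a, ?_, ?_⟩
  · -- F a = y₂
    have hFc : Continuous F := by
      exact Φ.continuous.add hΨ.continuous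
    have h1 : Tendsto (fun n => y₂ - F (u n)) atTop (𝓝 (y₂ - F a)) :=
      tendsto_const_nhds.sub ((hFc.tendsto a).comp ha)
    have h2 : Tendsto (fun n => y₂ - F (u n)) atTop (𝓝 0) := by
      apply squeeze_zero_norm hgeo
      have : Tendsto (fun n : ℕ => r ^ n) atTop (𝓝 0) :=
        tendsto_pow_atTop_nhds_zero_of_lt_one hr0 hLα
      simpa using this.mul_const ‖y₂ - F x₁‖
    have h3 := tendsto_nhds_unique h1 h2
    show F a = y₂
    exact (sub_eq_zero.mp h3).symm
  · have := dist_le_of_le_geometric_of_tendsto₀ r C hLα hdistu ha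
    rw [hu0] at this
    calc dist x₁ a ≤ C / (1 - r) := this
      _ = (α / (1 - (L : ℝ) * α)) * ‖y₂ - (Φ x₁ + Ψ x₁)‖ := by
        rw [hC, hr, hF]
        ring

theorem lipschitz_dependence_of_solution_sets
    {X Y : Type*} [NormedAddCommGroup X] [NormedSpace ℝ X] [CompleteSpace X]
    [NormedAddCommGroup Y] [NormedSpace ℝ Y] [CompleteSpace Y]
    (Φ : X →L[ℝ] Y) (hΦ : Function.Surjective Φ)
    (Ψ : X → Y) (L : NNReal) (hΨ : LipschitzWith L Ψ)
    (αΦ : ℝ)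
    (hα : αΦ = ⨆ y : Metric.closedBall (0 : Y) 1, Metric.infDist 0 (Φ ⁻¹' {(y : Y)}))
    (hL : (L : ℝ) < 1 / αΦ) :
    ∀ y₁ y₂ : Y,
      Metric.hausdorffDist {x : X | Φ x + Ψ x = y₁} {x : X | Φ x + Ψ x = y₂} ≤
        (αΦ / (1 - (L : ℝ) * αΦ)) * ‖y₁ - y₂‖ := by
  -- αΦ is positive
  have hα0 : 0 < αΦ := by
    by_contra h
    push_neg at h
    have h1 : 1 / αΦ ≤ 0 := one_div_nonpos.mpr h
    exact absurd (lt_of_le_of_lt L.coe_nonneg hL) (not_lt.mpr h1)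
  have hLα : (L : ℝ) * αΦ < 1 := (lt_div_iff₀ hα0).mp hL
  -- approximate right inverse with constant arbitrarily close to αΦ
  have hinv : ∀ ε > (0:ℝ), ∀ z : Y, ∃ x, Φ x = z ∧ ‖x‖ ≤ (αΦ + ε) * ‖z‖ := by
    intro ε hε z
    rcases eq_or_ne z 0 with rfl | hz
    · exact ⟨0, by simp, by simp⟩
    · -- bound the sup family
      obtain ⟨Cb, hCb0, hCb⟩ := Φ.exists_preimage_norm_le hΦ
      have hbdd : BddAbove (Set.range fun y : Metric.closedBall (0 : Y) 1 =>
          Metric.infDist 0 (Φ ⁻¹' {(y : Y)})) := by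
        refine ⟨Cb, fun v hv => ?_⟩
        obtain ⟨y, rfl⟩ := hv
        obtain ⟨x, hx1, hx2⟩ := hCb (y : Y)
        have hy1 : ‖(y : Y)‖ ≤ 1 := mem_closedBall_zero_iff.mp y.2
        calc Metric.infDist 0 (Φ ⁻¹' {(y : Y)}) ≤ dist 0 x :=
              Metric.infDist_le_dist_of_mem (by simpa using hx1)
          _ = ‖x‖ := by simp [dist_eq_norm]
          _ ≤ Cb * ‖(y : Y)‖ := hx2
          _ ≤ Cb := by nlinarith
      set y : Y := ‖z‖⁻¹ • z with hy
      have hzn : (0:ℝ) < ‖z‖ := norm_pos_iff.mpr hz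
      have hyn : ‖y‖ = 1 := by
        rw [hy, norm_smul]
        simp [abs_of_pos (inv_pos.mpr hzn), inv_mul_cancel₀ (ne_of_gt hzn)]
      have hymem : y ∈ Metric.closedBall (0 : Y) 1 := by
        simp [Metric.mem_closedBall, dist_eq_norm, hyn]
      have hle : Metric.infDist 0 (Φ ⁻¹' {y}) ≤ αΦ := by
        rw [hα]
        exact le_ciSup hbdd ⟨y, hymem⟩
      have hne : (Φ ⁻¹' {y}).Nonempty := by
        obtain ⟨x, hx⟩ := hΦ y
        exact ⟨x, hx⟩
      have hlt : Metric.infDist 0 (Φ ⁻¹' {y}) < αΦ + ε := lt_of_le_of_lt hle (by linarith)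
      obtain ⟨x', hx'mem, hx'⟩ := (Metric.infDist_lt_iff hne).mp hlt
      have hΦx' : Φ x' = y := hx'mem
      refine ⟨‖z‖ • x', ?_, ?_⟩
      · rw [map_smul, hΦx', hy, smul_smul, mul_inv_cancel₀ (ne_of_gt hzn), one_smul]
      · rw [norm_smul]
        have : ‖x'‖ < αΦ + ε := by simpa [dist_eq_norm] using hx'
        calc ‖‖z‖‖ * ‖x'‖ = ‖z‖ * ‖x'‖ := by simp
          _ ≤ ‖z‖ * (αΦ + ε) := by nlinarith
          _ = (αΦ + ε) * ‖z‖ := by ring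
  intro y₁ y₂
  -- bound for each small positive δ
  have hbound : ∀ δ > (0:ℝ), (L : ℝ) * (αΦ + δ) < 1 →
      Metric.hausdorffDist {x : X | Φ x + Ψ x = y₁} {x : X | Φ x + Ψ x = y₂} ≤
        ((αΦ + δ) / (1 - (L : ℝ) * (αΦ + δ))) * ‖y₁ - y₂‖ := by
    intro δ hδ hLδ
    have hαδ0 : (0:ℝ) ≤ αΦ + δ := by linarith
    have hden : (0:ℝ) < 1 - (L : ℝ) * (αΦ + δ) := by linarith
    have hr : (0:ℝ) ≤ ((αΦ + δ) / (1 - (L : ℝ) * (αΦ + δ))) * ‖y₁ - y₂‖ :=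
      mul_nonneg (div_nonneg hαδ0 hden.le) (norm_nonneg _)
    apply Metric.hausdorffDist_le_of_mem_dist hr
    · intro x hx
      obtain ⟨x₂, hx₂, hd⟩ := key_perturb Φ Ψ L hΨ (αΦ + δ) hαδ0 (hinv δ hδ) hLδ y₂ x
      refine ⟨x₂, hx₂, ?_⟩
      have hxeq : Φ x + Ψ x = y₁ := hx
      calc dist x x₂ ≤ ((αΦ + δ) / (1 - (L : ℝ) * (αΦ + δ))) * ‖y₂ - (Φ x + Ψ x)‖ := hd
        _ = ((αΦ + δ) / (1 - (L : ℝ) * (αΦ + δ))) * ‖y₁ - y₂‖ := by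
            rw [hxeq, norm_sub_rev]
    · intro x hx
      obtain ⟨x₂, hx₂, hd⟩ := key_perturb Φ Ψ L hΨ (αΦ + δ) hαδ0 (hinv δ hδ) hLδ y₁ x
      refine ⟨x₂, hx₂, ?_⟩
      have hxeq : Φ x + Ψ x = y₂ := hx
      calc dist x x₂ ≤ ((αΦ + δ) / (1 - (L : ℝ) * (αΦ + δ))) * ‖y₁ - (Φ x + Ψ x)‖ := hd
        _ = ((αΦ + δ) / (1 - (L : ℝ) * (αΦ + δ))) * ‖y₁ - y₂‖ := by rw [hxeq]
  -- pass to the limit δ → 0⁺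
  have htend : Filter.Tendsto
      (fun δ : ℝ => ((αΦ + δ) / (1 - (L : ℝ) * (αΦ + δ))) * ‖y₁ - y₂‖)
      (𝓝[>] (0:ℝ)) (𝓝 ((αΦ / (1 - (L : ℝ) * αΦ)) * ‖y₁ - y₂‖)) := by
    have hden : (1 - (L : ℝ) * (αΦ + 0)) ≠ 0 := by
      simp only [add_zero]; linarith
    have hc : ContinuousAt
        (fun δ : ℝ => ((αΦ + δ) / (1 - (L : ℝ) * (αΦ + δ))) * ‖y₁ - y₂‖) 0 := by
      apply ContinuousAt.mul _ continuousAt_const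
      exact ContinuousAt.div (by fun_prop) (by fun_prop) hden
    have := hc.tendsto
    simp only [add_zero] at this
    exact this.mono_left nhdsWithin_le_nhds
  have hev : ∀ᶠ δ in 𝓝[>] (0:ℝ),
      Metric.hausdorffDist {x : X | Φ x + Ψ x = y₁} {x : X | Φ x + Ψ x = y₂} ≤
        ((αΦ + δ) / (1 - (L : ℝ) * (αΦ + δ))) * ‖y₁ - y₂‖ := by
    have h1 : ∀ᶠ δ in 𝓝 (0:ℝ), (L : ℝ) * (αΦ + δ) < 1 := by
      have hct : Filter.Tendsto (fun δ : ℝ => (L : ℝ) * (αΦ + δ)) (𝓝 0)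
          (𝓝 ((L : ℝ) * αΦ)) := by
        have : ContinuousAt (fun δ : ℝ => (L : ℝ) * (αΦ + δ)) 0 := by fun_prop
        simpa using this.tendsto
      exact hct.eventually_lt_const hLα
    filter_upwards [h1.filter_mono nhdsWithin_le_nhds, self_mem_nhdsWithin] with δ h1δ h2δ
    exact hbound δ h2δ h1δ
  exact ge_of_tendsto htend hev
end

section
/- Let E be a real normed space, x* ∈ E* a continuous linear functional, and f : E → ℝ Lipschitz with constant L < ‖x*‖. Then the function y ↦ x*(y) − f(y) is surjective onto ℝ and has no local extrema; in particular, the set {y ∈ E : x*(y) = f(y)} is non-empty and has empty interior. -/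
open Filter Topology

theorem functional_minus_lipschitz_surjective_no_local_extrema
    {E : Type*} [NormedAddCommGroup E] [NormedSpace ℝ E]
    (x' : E →L[ℝ] ℝ) (f : E → ℝ) (L : NNReal)
    (hf : LipschitzWith L f) (hL : (L : ℝ) < ‖x'‖) :
    Function.Surjective (fun y : E => x' y - f y) ∧
    (∀ y : E, ¬ IsLocalMax (fun y : E => x' y - f y) y ∧
              ¬ IsLocalMin (fun y : E => x' y - f y) y) ∧
    {y : E | x' y = f y}.Nonempty ∧
    interior {y : E | x' y = f y} = ∅ := by
  set g : E → ℝ := fun y => x' y - f y with hgdef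
  obtain ⟨u, hu1, hu2⟩ : ∃ u : E, ‖u‖ ≤ 1 ∧ (L : ℝ) < x' u := by
    obtain ⟨v, hv1, hv2⟩ := x'.exists_lt_apply_of_lt_opNorm hL
    rcases abs_cases (x' v) with ⟨h1, _⟩ | ⟨h1, _⟩
    · exact ⟨v, hv1.le, by rwa [Real.norm_eq_abs, h1] at hv2⟩
    · refine ⟨-v, by simpa using hv1.le, ?_⟩
      rw [map_neg]
      rwa [Real.norm_eq_abs, h1] at hv2
  set c : ℝ := x' u - L with hcdef
  have hc : 0 < c := sub_pos.2 hu2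
  have key : ∀ (y : E) (t : ℝ), |g (y + t • u) - (g y + t * x' u)| ≤ (L : ℝ) * |t| := by
    intro y t
    have h1 : |f (y + t • u) - f y| ≤ (L : ℝ) * |t| := by
      have h2 := hf.dist_le_mul (y + t • u) y
      rw [Real.dist_eq, dist_eq_norm, add_sub_cancel_left, norm_smul,
        Real.norm_eq_abs] at h2
      refine h2.trans ?_
      have := mul_le_mul_of_nonneg_left hu1 (abs_nonneg t)
      nlinarith [L.coe_nonneg, abs_nonneg t]
    have h3 : g (y + t • u) - (g y + t * x' u) = -(f (y + t • u) - f y) := by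
      simp only [hgdef, map_add, map_smul, smul_eq_mul]
      ring
    rw [h3, abs_neg]
    exact h1
  have keyP : ∀ (y : E) (t : ℝ), 0 ≤ t → g y + t * c ≤ g (y + t • u) := by
    intro y t ht
    have h := abs_le.1 (key y t)
    rw [abs_of_nonneg ht] at h
    simp only [hcdef] at *
    nlinarith [h.1, h.2]
  have keyN : ∀ (y : E) (t : ℝ), t ≤ 0 → g (y + t • u) ≤ g y + t * c := by
    intro y t ht
    have h := abs_le.1 (key y t)
    rw [abs_of_nonpos ht] at h
    simp only [hcdef] at *
    nlinarith [h.1, h.2]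
  have hgc : Continuous g := x'.continuous.sub hf.continuous
  have hsurj : Function.Surjective g := by
    have hline : Continuous (fun t : ℝ => g (t • u)) :=
      hgc.comp (continuous_id.smul continuous_const)
    have htop : Tendsto (fun t : ℝ => g (t • u)) atTop atTop := by
      refine tendsto_atTop_mono' _ ?_
        (tendsto_atTop_add_const_left _ (g 0) (tendsto_id.atTop_mul_const hc))
      filter_upwards [eventually_ge_atTop (0 : ℝ)] with t ht
      simpa using keyP 0 t ht
    have hbot : Tendsto (fun t : ℝ => g (t • u)) atBot atBot := by
      refine tendsto_atBot_mono' _ ?_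
        (tendsto_atBot_add_const_left _ (g 0) (tendsto_id.atBot_mul_const hc))
      filter_upwards [eventually_le_atBot (0 : ℝ)] with t ht
      simpa using keyN 0 t ht
    intro z
    obtain ⟨t, ht⟩ := hline.surjective htop hbot z
    exact ⟨t • u, ht⟩
  have hpath : ∀ y : E, Tendsto (fun t : ℝ => y + t • u) (𝓝 0) (𝓝 y) := by
    intro y
    have : Continuous (fun t : ℝ => y + t • u) :=
      continuous_const.add (continuous_id.smul continuous_const)
    simpa using this.tendsto 0
  have hmax : ∀ y : E, ¬ IsLocalMax g y := by
    intro y h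
    have h1 : ∀ᶠ t : ℝ in 𝓝[>] 0, g (y + t • u) ≤ g y :=
      ((hpath y).mono_left nhdsWithin_le_nhds).eventually h
    obtain ⟨t, hle, ht⟩ := (h1.and (eventually_mem_nhdsWithin)).exists
    have := keyP y t (le_of_lt ht)
    nlinarith [mul_pos ht hc]
  have hmin : ∀ y : E, ¬ IsLocalMin g y := by
    intro y h
    have h1 : ∀ᶠ t : ℝ in 𝓝[<] 0, g y ≤ g (y + t • u) :=
      ((hpath y).mono_left nhdsWithin_le_nhds).eventually h
    obtain ⟨t, hle, ht⟩ := (h1.and (eventually_mem_nhdsWithin)).exists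
    have := keyN y t (le_of_lt ht)
    nlinarith [mul_pos_of_neg_of_neg (show t < 0 from ht) (neg_neg_iff_pos.2 hc)]
  refine ⟨hsurj, fun y => ⟨hmax y, hmin y⟩, ?_, ?_⟩
  · obtain ⟨y, hy⟩ := hsurj 0
    exact ⟨y, sub_eq_zero.1 hy⟩
  · by_contra h
    obtain ⟨y, hy⟩ := Set.nonempty_iff_ne_empty.2 h
    have hyS : y ∈ {y : E | x' y = f y} := interior_subset hy
    have hmem : {y : E | x' y = f y} ∈ 𝓝 y := mem_interior_iff_mem_nhds.1 hy
    have : IsLocalMax g y := by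
      filter_upwards [hmem] with z hz
      have : g z = 0 := sub_eq_zero.2 hz
      have hy0 : g y = 0 := sub_eq_zero.2 hyS
      simp [this, hy0]
    exact hmax y this
end

section
/- Let X be a connected topological space, E a real Banach space, Φ : X → E* an operator, and f : X × E → ℝ such that for each x ∈ X, f(x,·) is Lipschitz on E with constant L(x) ≥ 0. Assume the set {y ∈ E : x ↦ ⟨Φ(x),y⟩ − f(x,y) is continuous} is dense in E, and that the set {(x,y) ∈ X × E : ⟨Φ(x),y⟩ = f(x,y)} is disconnected. Then there exists x₀ ∈ X with ‖Φ(x₀)‖_{E*} ≤ L(x₀). -/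
open Set

section aux
variable {E : Type*} [NormedAddCommGroup E] [NormedSpace ℝ E]

lemma aux_slope (φ : E →L[ℝ] ℝ) {fx : E → ℝ} {L : NNReal} (hf : LipschitzWith L fx)
    {u : E} (hu : ‖u‖ ≤ 1) {s t : ℝ} (hst : s ≤ t) (y : E) :
    (φ (y + s • u) - fx (y + s • u)) + (t - s) * (φ u - (L : ℝ)) ≤
      φ (y + t • u) - fx (y + t • u) := by
  have hφ : φ (y + t • u) = φ (y + s • u) + (t - s) * φ u := by
    simp [map_add, map_smul, smul_eq_mul]; ring
  have h1 := hf.dist_le_mul (y + t • u) (y + s • u)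
  have h2 : dist (y + t • u) (y + s • u) = (t - s) * ‖u‖ := by
    rw [dist_eq_norm]
    have h : (y + t • u) - (y + s • u) = (t - s) • u := by module
    rw [h, norm_smul, Real.norm_eq_abs, abs_of_nonneg (by linarith)]
  have h3 : fx (y + t • u) - fx (y + s • u) ≤ dist (fx (y + t • u)) (fx (y + s • u)) := by
    rw [Real.dist_eq]; exact le_abs_self _
  have h4 : (L : ℝ) * ((t - s) * ‖u‖) ≤ (t - s) * L := by
    have := mul_le_mul_of_nonneg_left hu (mul_nonneg L.coe_nonneg (sub_nonneg.mpr hst))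
    nlinarith
  rw [h2] at h1
  nlinarith


lemma aux_cont (φ : E →L[ℝ] ℝ) {fx : E → ℝ} {L : NNReal} (hf : LipschitzWith L fx) :
    Continuous fun y : E => φ y - fx y :=
  φ.continuous.sub hf.continuous

lemma aux_exists_zero (φ : E →L[ℝ] ℝ) {fx : E → ℝ} {L : NNReal} (hf : LipschitzWith L fx)
    {u : E} (hu : ‖u‖ ≤ 1) (hc : (L : ℝ) < φ u) (y : E) :
    ∃ t : ℝ, φ (y + t • u) - fx (y + t • u) = 0 := by
  have hc0 : (0 : ℝ) < φ u - (L : ℝ) := by linarith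
  have hgc : Continuous (fun t : ℝ => φ (y + t • u) - fx (y + t • u)) :=
    (aux_cont φ hf).comp (by continuity)
  set T : ℝ := |φ y - fx y| / (φ u - (L : ℝ)) + 1 with hT
  have hT0 : 0 ≤ T := by positivity
  have hTb : |φ y - fx y| ≤ T * (φ u - (L : ℝ)) := by
    rw [hT, add_mul, div_mul_cancel₀ _ (ne_of_gt hc0)]
    nlinarith
  have hpos : 0 ≤ φ (y + T • u) - fx (y + T • u) := by
    have h := aux_slope φ hf hu hT0 y
    simp only [zero_smul, add_zero] at h
    have habs := neg_abs_le (φ y - fx y)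
    nlinarith
  have hneg : φ (y + (-T) • u) - fx (y + (-T) • u) ≤ 0 := by
    have h := aux_slope φ hf hu (neg_nonpos_of_nonneg hT0) (y := y) (t := 0)
    simp only [zero_smul, add_zero] at h
    have habs := le_abs_self (φ y - fx y)
    nlinarith
  have hmem : (0 : ℝ) ∈ Icc (φ (y + (-T) • u) - fx (y + (-T) • u))
      (φ (y + T • u) - fx (y + T • u)) := ⟨hneg, hpos⟩
  have := intermediate_value_Icc (by linarith : (-T : ℝ) ≤ T) hgc.continuousOn hmem
  obtain ⟨t, _, ht⟩ := this
  exact ⟨t, ht⟩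

lemma aux_unique (φ : E →L[ℝ] ℝ) {fx : E → ℝ} {L : NNReal} (hf : LipschitzWith L fx)
    {u : E} (hu : ‖u‖ ≤ 1) (hc : (L : ℝ) < φ u) (y : E) {t1 t2 : ℝ}
    (h1 : φ (y + t1 • u) - fx (y + t1 • u) = 0)
    (h2 : φ (y + t2 • u) - fx (y + t2 • u) = 0) : t1 = t2 := by
  have key : ∀ a b : ℝ, a ≤ b → φ (y + a • u) - fx (y + a • u) = 0 →
      φ (y + b • u) - fx (y + b • u) = 0 → b ≤ a := by
    intro a b hab ha hb
    have := aux_slope φ hf hu hab y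
    nlinarith
  rcases le_total t1 t2 with h | h
  · exact le_antisymm h (key _ _ h h1 h2)
  · exact le_antisymm (key _ _ h h2 h1) h

lemma aux_main (φ : E →L[ℝ] ℝ) {fx : E → ℝ} {L : NNReal} (hf : LipschitzWith L fx)
    {u : E} (hu : ‖u‖ ≤ 1) (hc : (L : ℝ) < φ u) :
    ∃ r : E → E, Continuous r ∧ (∀ y, φ (r y) = fx (r y)) ∧
      (∀ y, φ y = fx y → r y = y) := by
  set c : ℝ := φ u - (L : ℝ) with hcdef
  have hc0 : 0 < c := by simp [hcdef]; linarith
  choose tm htm using aux_exists_zero φ hf hu hc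
  set K : ℝ := ‖φ‖ + (L : ℝ) with hK
  have hK0 : 0 ≤ K := by positivity
  have hgl : LipschitzWith (‖φ‖₊ + L) (fun y : E => φ y - fx y) :=
    φ.lipschitz.sub hf
  have hgK : ∀ a b : E, φ a - fx a - (φ b - fx b) ≤ K * ‖a - b‖ := by
    intro a b
    have h1 := hgl.dist_le_mul a b
    rw [Real.dist_eq, dist_eq_norm] at h1
    have h2 : φ a - fx a - (φ b - fx b) ≤ |φ a - fx a - (φ b - fx b)| := le_abs_self _
    have h3 : ((‖φ‖₊ + L : NNReal) : ℝ) = K := by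
      simp [hK]
    rw [h3] at h1
    linarith
  have honeside : ∀ y y' : E, tm y' ≤ tm y + (K / c) * ‖y - y'‖ := by
    intro y y'
    by_contra hlt
    push_neg at hlt
    set d : ℝ := (K / c) * ‖y - y'‖ with hd
    have hd0 : 0 ≤ d := by positivity
    -- strict mono: g (y' + (tm y + d) • u) < 0
    have h1 : φ (y' + (tm y + d) • u) - fx (y' + (tm y + d) • u)
        + (tm y' - (tm y + d)) * c ≤ 0 := by
      have h := aux_slope φ hf hu (le_of_lt hlt) y'
      rw [htm y', ← hcdef] at h
      linarith
    have hstep : 0 < (tm y' - (tm y + d)) * c := by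
      apply mul_pos (by linarith) hc0
    have hneg : φ (y' + (tm y + d) • u) - fx (y' + (tm y + d) • u) < 0 := by linarith
    -- lower bound
    have h2 : (0 : ℝ) + d * c ≤ φ (y + (tm y + d) • u) - fx (y + (tm y + d) • u) := by
      have h := aux_slope φ hf hu (s := tm y) (t := tm y + d) (le_add_of_nonneg_right hd0) y
      rw [htm y, ← hcdef] at h
      linarith
    have h3 := hgK (y + (tm y + d) • u) (y' + (tm y + d) • u)
    have h4 : ‖(y + (tm y + d) • u) - (y' + (tm y + d) • u)‖ = ‖y - y'‖ := by
      congr 1; module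
    rw [h4] at h3
    have hdc : d * c = K * ‖y - y'‖ := by
      rw [hd]; field_simp
    nlinarith
  have habs : ∀ y y' : E, dist (tm y) (tm y') ≤ (K / c) * dist y y' := by
    intro y y'
    rw [Real.dist_eq, dist_eq_norm, abs_sub_le_iff]
    constructor
    · have := honeside y' y
      rw [norm_sub_rev] at this
      linarith
    · have := honeside y y'
      linarith
  have htcont : Continuous tm := by
    have : LipschitzWith (Real.toNNReal (K / c)) tm := by
      apply LipschitzWith.of_dist_le_mul
      intro a b
      rw [Real.coe_toNNReal _ (by positivity)]
      exact habs a b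
    exact this.continuous
  refine ⟨fun y => y + tm y • u, by continuity, ?_, ?_⟩
  · intro y
    have := htm y
    linarith [htm y]
  · intro y hy
    have h0 : φ (y + (0:ℝ) • u) - fx (y + (0:ℝ) • u) = 0 := by
      simp [hy]
    have h := aux_unique φ hf hu hc y (htm y) h0
    show y + tm y • u = y
    rw [h]
    simp

end aux

theorem norm_dual_le_lipschitz_constant_of_disconnected_coincidence_set
    {X : Type*} [TopologicalSpace X] [ConnectedSpace X]
    {E : Type*} [NormedAddCommGroup E] [NormedSpace ℝ E] [CompleteSpace E]
    (Φ : X → (E →L[ℝ] ℝ)) (f : X → E → ℝ) (L : X → NNReal)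
    (hf : ∀ x : X, LipschitzWith (L x) (f x))
    (hdense : Dense {y : E | Continuous fun x : X => Φ x y - f x y})
    (hdisc : ¬ IsPreconnected {p : X × E | Φ p.1 p.2 = f p.1 p.2}) :
    ∃ x₀ : X, ‖Φ x₀‖ ≤ (L x₀ : ℝ) := by
  by_contra hcon
  push_neg at hcon
  apply hdisc
  have hux : ∀ x : X, ∃ u : E, ‖u‖ ≤ 1 ∧ (L x : ℝ) < Φ x u := by
    intro x
    obtain ⟨w, hw1, hw2⟩ := (Φ x).exists_lt_apply_of_lt_opNorm (hcon x)
    rw [Real.norm_eq_abs] at hw2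
    rcases lt_abs.mp hw2 with h | h
    · exact ⟨w, le_of_lt hw1, h⟩
    · exact ⟨-w, by simpa using le_of_lt hw1, by simpa using h⟩
  choose u hu1 hu2 using hux
  choose r hrc hrz hrr using fun x : X => aux_main (Φ x) (hf x) (hu1 x) (hu2 x)
  have hTx : ∀ x : X, IsPreconnected ((fun y : E => (x, y)) '' Set.range (r x)) := by
    intro x
    have h1 : IsPreconnected (Set.range (r x)) := by
      rw [← Set.image_univ]
      exact ((convex_univ : Convex ℝ (Set.univ : Set E)).isPreconnected).image _
        (hrc x).continuousOn
    exact h1.image _ (Continuous.prodMk_right x).continuousOn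
  intro U V hUo hVo hUV hU hV
  by_contra hne
  rw [Set.not_nonempty_iff_eq_empty] at hne
  -- openness of slice-projection sets
  have key : ∀ W : Set (X × E), IsOpen W →
      IsOpen {x : X | ∃ y : E, Φ x y = f x y ∧ (x, y) ∈ W} := by
    intro W hWo
    rw [isOpen_iff_mem_nhds]
    rintro x0 ⟨y0, hy0S, hy0W⟩
    obtain ⟨N0, W0, hN0o, hW0o, hxN0, hyW0, hsub⟩ := isOpen_prod_iff.mp hWo x0 y0 hy0W
    obtain ⟨ε, hε, hball⟩ := Metric.isOpen_iff.mp hW0o y0 hyW0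
    have hg00 : Φ x0 y0 - f x0 y0 = 0 := sub_eq_zero_of_eq hy0S
    -- positive point of the dense set near y0
    have hyp0mem : y0 + (ε / 2) • u x0 ∈ Metric.ball y0 ε := by
      rw [Metric.mem_ball, dist_eq_norm]
      have h : (y0 + (ε / 2) • u x0) - y0 = (ε / 2) • u x0 := by module
      rw [h, norm_smul, Real.norm_eq_abs, abs_of_nonneg (by linarith)]
      nlinarith [norm_nonneg (u x0), hu1 x0]
    have hyp0pos : 0 < Φ x0 (y0 + (ε / 2) • u x0) - f x0 (y0 + (ε / 2) • u x0) := by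
      have h := aux_slope (Φ x0) (hf x0) (hu1 x0) (s := 0) (t := ε / 2) (by linarith) y0
      simp only [zero_smul, add_zero] at h
      nlinarith [hu2 x0]
    have hyn0mem : y0 + (-(ε / 2)) • u x0 ∈ Metric.ball y0 ε := by
      rw [Metric.mem_ball, dist_eq_norm]
      have h : (y0 + (-(ε / 2)) • u x0) - y0 = (-(ε / 2)) • u x0 := by module
      rw [h, norm_smul, Real.norm_eq_abs, abs_of_nonpos (by linarith), neg_neg]
      nlinarith [norm_nonneg (u x0), hu1 x0]
    have hyn0neg : Φ x0 (y0 + (-(ε / 2)) • u x0) - f x0 (y0 + (-(ε / 2)) • u x0) < 0 := by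
      have h := aux_slope (Φ x0) (hf x0) (hu1 x0) (s := -(ε / 2)) (t := 0) (by linarith) y0
      simp only [zero_smul, add_zero] at h
      nlinarith [hu2 x0]
    obtain ⟨yp, hypD, hypB, hypP⟩ : ∃ yp, (Continuous fun x : X => Φ x yp - f x yp) ∧
        yp ∈ Metric.ball y0 ε ∧ 0 < Φ x0 yp - f x0 yp := by
      have hopen : IsOpen (Metric.ball y0 ε ∩ {y : E | 0 < Φ x0 y - f x0 y}) :=
        Metric.isOpen_ball.inter (isOpen_lt continuous_const (aux_cont (Φ x0) (hf x0)))
      obtain ⟨yp, hD, hB, hP⟩ := hdense.exists_mem_open hopen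
        ⟨y0 + (ε / 2) • u x0, hyp0mem, hyp0pos⟩
      exact ⟨yp, hD, hB, hP⟩
    obtain ⟨yn, hynD, hynB, hynN⟩ : ∃ yn, (Continuous fun x : X => Φ x yn - f x yn) ∧
        yn ∈ Metric.ball y0 ε ∧ Φ x0 yn - f x0 yn < 0 := by
      have hopen : IsOpen (Metric.ball y0 ε ∩ {y : E | Φ x0 y - f x0 y < 0}) :=
        Metric.isOpen_ball.inter (isOpen_lt (aux_cont (Φ x0) (hf x0)) continuous_const)
      obtain ⟨yn, hD, hB, hP⟩ := hdense.exists_mem_open hopen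
        ⟨y0 + (-(ε / 2)) • u x0, hyn0mem, hyn0neg⟩
      exact ⟨yn, hD, hB, hP⟩
    have hNpo : IsOpen ((fun x : X => Φ x yp - f x yp) ⁻¹' Set.Ioi 0) :=
      hypD.isOpen_preimage _ isOpen_Ioi
    have hNno : IsOpen ((fun x : X => Φ x yn - f x yn) ⁻¹' Set.Iio 0) :=
      hynD.isOpen_preimage _ isOpen_Iio
    refine mem_nhds_iff.mpr ⟨N0 ∩ ((fun x : X => Φ x yp - f x yp) ⁻¹' Set.Ioi 0)
      ∩ ((fun x : X => Φ x yn - f x yn) ⁻¹' Set.Iio 0), ?_, ?_, ?_⟩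
    · rintro x ⟨⟨hxN, hxP⟩, hxN'⟩
      have hxP' : 0 < Φ x yp - f x yp := hxP
      have hxN'' : Φ x yn - f x yn < 0 := hxN'
      -- IVT on the segment from yn to yp
      have hcont : Continuous fun s : ℝ => Φ x (yn + s • (yp - yn)) - f x (yn + s • (yp - yn)) :=
        (aux_cont (Φ x) (hf x)).comp (by continuity)
      have h0 : Φ x (yn + (0:ℝ) • (yp - yn)) - f x (yn + (0:ℝ) • (yp - yn)) < 0 := by
        simpa using hxN''
      have h1 : 0 < Φ x (yn + (1:ℝ) • (yp - yn)) - f x (yn + (1:ℝ) • (yp - yn)) := by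
        have he : yn + (1:ℝ) • (yp - yn) = yp := by module
        rw [he]; exact hxP'
      have hmem : (0:ℝ) ∈ Set.Icc (Φ x (yn + (0:ℝ) • (yp - yn)) - f x (yn + (0:ℝ) • (yp - yn)))
          (Φ x (yn + (1:ℝ) • (yp - yn)) - f x (yn + (1:ℝ) • (yp - yn))) :=
        ⟨le_of_lt h0, le_of_lt h1⟩
      obtain ⟨s, hs, hval⟩ := intermediate_value_Icc (zero_le_one) hcont.continuousOn hmem
      refine ⟨yn + s • (yp - yn), sub_eq_zero.mp hval, hsub ?_⟩
      refine Set.mk_mem_prod hxN (hball ?_)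
      have hrepr : yn + s • (yp - yn) = (1 - s) • yn + s • yp := by module
      rw [hrepr]
      exact (convex_ball y0 ε) hynB hypB (by linarith [hs.1, hs.2]) hs.1 (by ring)
    · exact (hN0o.inter hNpo).inter hNno
    · exact ⟨⟨hxN0, hypP⟩, hynN⟩
  -- the two projection sets
  set A := {x : X | ∃ y : E, Φ x y = f x y ∧ (x, y) ∈ U} with hA
  set B := {x : X | ∃ y : E, Φ x y = f x y ∧ (x, y) ∈ V} with hB
  have hdisj : ∀ x : X, x ∈ A → x ∈ B → False := by
    rintro x ⟨y1, hS1, hU1⟩ ⟨y2, hS2, hV2⟩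
    have hcover : (fun y : E => (x, y)) '' Set.range (r x) ⊆ U ∪ V := by
      rintro p ⟨y', ⟨z, rfl⟩, rfl⟩
      exact hUV (hrz x z)
    have hy1 : (x, y1) ∈ (fun y : E => (x, y)) '' Set.range (r x) :=
      ⟨y1, ⟨y1, hrr x y1 hS1⟩, rfl⟩
    have hy2 : (x, y2) ∈ (fun y : E => (x, y)) '' Set.range (r x) :=
      ⟨y2, ⟨y2, hrr x y2 hS2⟩, rfl⟩
    obtain ⟨p, hpT, hpU, hpV⟩ := hTx x U V hUo hVo hcover ⟨(x, y1), hy1, hU1⟩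
      ⟨(x, y2), hy2, hV2⟩
    obtain ⟨y', ⟨z, rfl⟩, rfl⟩ := hpT
    have hpS : (x, r x z) ∈ {p : X × E | Φ p.1 p.2 = f p.1 p.2} := hrz x z
    have := Set.eq_empty_iff_forall_notMem.mp hne (x, r x z)
    exact this ⟨hpS, hpU, hpV⟩
  have hcover : ∀ x : X, x ∈ A ∨ x ∈ B := by
    intro x
    have hSx : ((x : X), r x 0) ∈ {p : X × E | Φ p.1 p.2 = f p.1 p.2} := hrz x 0
    rcases hUV hSx with h | h
    · exact Or.inl ⟨r x 0, hrz x 0, h⟩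
    · exact Or.inr ⟨r x 0, hrz x 0, h⟩
  have hAne : A.Nonempty := by
    obtain ⟨p, hpS, hpU⟩ := hU
    exact ⟨p.1, p.2, hpS, by simpa using hpU⟩
  have hBne : B.Nonempty := by
    obtain ⟨p, hpS, hpV⟩ := hV
    exact ⟨p.1, p.2, hpS, by simpa using hpV⟩
  have hcompl : Aᶜ = B := by
    ext x
    constructor
    · intro hx
      rcases hcover x with h | h
      · exact absurd h hx
      · exact h
    · intro hx hxA
      exact hdisj x hxA hx
  have hclopen : IsClopen A := by
    constructor
    · rw [← isOpen_compl_iff, hcompl]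
      exact key V hVo
    · exact key U hUo
  rcases isClopen_iff.mp hclopen with h | h
  · rw [h] at hAne
    exact absurd hAne Set.not_nonempty_empty
  · obtain ⟨x, hx⟩ := hBne
    exact hdisj x (h ▸ Set.mem_univ x) hx
end

section
/- Let X be a connected topological space, E a real Banach space, and Φ : X → E* an operator with closed range. Assume for each ε > 0 there is a function f_ε : X × E → ℝ such that: (a) for each x ∈ X, f_ε(x,·) is Lipschitz on E with constant at most ε; (b) the set {y ∈ E : x ↦ ⟨Φ(x),y⟩ − f_ε(x,y) is continuous} is dense in E; (c) the set {(x,y) ∈ X × E : ⟨Φ(x),y⟩ = f_ε(x,y)} is disconnected. Then Φ vanishes at some point of X. -/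
open Set

private lemma root_exists' {g : ℝ → ℝ} (hg : Continuous g) {c : ℝ} (hc : 0 < c)
    (hmono : ∀ s t : ℝ, s ≤ t → c * (t - s) ≤ g t - g s) :
    ∃ t : ℝ, g t = 0 ∧ |t| ≤ |g 0| / c := by
  set M : ℝ := |g 0| / c with hM
  have hM0 : 0 ≤ M := div_nonneg (abs_nonneg _) hc.le
  have hcM : c * M = |g 0| := by
    rw [hM, mul_div_cancel₀ _ hc.ne']
  have h1 : g (-M) ≤ 0 := by
    have := hmono (-M) 0 (by linarith)
    have := le_abs_self (g 0)
    nlinarith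
  have h2 : 0 ≤ g M := by
    have := hmono 0 M hM0
    have := neg_abs_le (g 0)
    nlinarith
  have hsub := intermediate_value_Icc (by linarith : -M ≤ M) hg.continuousOn
  obtain ⟨t, ht, hgt⟩ := hsub ⟨h1, h2⟩
  exact ⟨t, hgt, abs_le.mpr ⟨ht.1, ht.2⟩⟩

section aux

variable {E : Type*} [NormedAddCommGroup E] [NormedSpace ℝ E]
  (φ : E →L[ℝ] ℝ) (f : E → ℝ) {ε c : ℝ} {u : E}

private lemma aux_mono (hε : 0 ≤ ε) (hc : 0 < c)
    (hf : ∀ a b, |f a - f b| ≤ ε * ‖a - b‖) (hu : ‖u‖ ≤ 1) (hφu : ε + c ≤ φ u)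
    (y : E) {s t : ℝ} (hst : s ≤ t) :
    c * (t - s) ≤ (φ (y + t • u) - f (y + t • u)) - (φ (y + s • u) - f (y + s • u)) := by
  have hdiff : (y + t • u) - (y + s • u) = (t - s) • u := by
    rw [sub_smul]; abel
  have hφd : φ (y + t • u) - φ (y + s • u) = (t - s) * φ u := by
    rw [← map_sub, hdiff, map_smul, smul_eq_mul]
  have hfd : |f (y + t • u) - f (y + s • u)| ≤ ε * ((t - s) * ‖u‖) := by
    have := hf (y + t • u) (y + s • u)
    rw [hdiff, norm_smul, Real.norm_eq_abs] at this
    rwa [abs_of_nonneg (sub_nonneg.mpr hst)] at this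
  have h1 := (abs_le.mp hfd).2
  have hts : 0 ≤ t - s := by linarith
  have hu0 : 0 ≤ ‖u‖ := norm_nonneg u
  nlinarith [mul_le_mul_of_nonneg_left hu (mul_nonneg hε hts),
    mul_le_mul_of_nonneg_left hφu hts]

private lemma aux_root (hfc : Continuous f) (hε : 0 ≤ ε) (hc : 0 < c)
    (hf : ∀ a b, |f a - f b| ≤ ε * ‖a - b‖) (hu : ‖u‖ ≤ 1) (hφu : ε + c ≤ φ u)
    (y : E) : ∃ t : ℝ, φ (y + t • u) = f (y + t • u) ∧ |t| ≤ |φ y - f y| / c := by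
  have hg : Continuous fun t : ℝ => φ (y + t • u) - f (y + t • u) := by
    have hline : Continuous fun t : ℝ => y + t • u :=
      continuous_const.add (continuous_id.smul continuous_const)
    exact (φ.continuous.comp hline).sub (hfc.comp hline)
  obtain ⟨t, ht0, htb⟩ := root_exists' hg hc (fun s t hst => aux_mono φ f hε hc hf hu hφu y hst)
  refine ⟨t, by linarith [sub_eq_zero.mp ht0], ?_⟩
  · simpa [zero_smul] using htb

private lemma aux_lip (hε : 0 ≤ ε) (hc : 0 < c)
    (hf : ∀ a b, |f a - f b| ≤ ε * ‖a - b‖) (hu : ‖u‖ ≤ 1) (hφu : ε + c ≤ φ u)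
    (y₁ y₂ : E) (t₁ t₂ : ℝ) (h₁ : φ (y₁ + t₁ • u) = f (y₁ + t₁ • u))
    (h₂ : φ (y₂ + t₂ • u) = f (y₂ + t₂ • u)) :
    c * |t₁ - t₂| ≤ (‖φ‖ + ε) * ‖y₁ - y₂‖ := by
  have key : ∀ (a b : E) (s t : ℝ), φ (a + s • u) = f (a + s • u) →
      φ (b + t • u) = f (b + t • u) → s ≤ t →
      c * (t - s) ≤ (‖φ‖ + ε) * ‖a - b‖ := by
    intro a b s t ha hb hst
    have hm := aux_mono φ f hε hc hf hu hφu b hst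
    have hdiff : (a + s • u) - (b + s • u) = a - b := by abel
    have hφab : |φ (a + s • u) - φ (b + s • u)| ≤ ‖φ‖ * ‖a - b‖ := by
      have := φ.le_opNorm (a - b)
      rw [Real.norm_eq_abs] at this
      rwa [← map_sub, hdiff]
    have hfab : |f (a + s • u) - f (b + s • u)| ≤ ε * ‖a - b‖ := by
      have := hf (a + s • u) (b + s • u)
      rwa [hdiff] at this
    linarith [(abs_le.mp hφab).2, (abs_le.mp hfab).1, hm]
  rcases le_total t₁ t₂ with hle | hle
  · rw [abs_sub_comm, abs_of_nonneg (sub_nonneg.mpr hle)]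
    exact key y₁ y₂ t₁ t₂ h₁ h₂ hle
  · rw [abs_of_nonneg (sub_nonneg.mpr hle)]
    have := key y₂ y₁ t₂ t₁ h₂ h₁ hle
    rwa [norm_sub_rev y₂ y₁] at this

private lemma aux_slice (hfc : Continuous f) (hε : 0 ≤ ε) (hc : 0 < c)
    (hf : ∀ a b, |f a - f b| ≤ ε * ‖a - b‖) (hu : ‖u‖ ≤ 1) (hφu : ε + c ≤ φ u) :
    IsPreconnected {y : E | φ y = f y} := by
  have hroot := fun y => aux_root φ f hfc hε hc hf hu hφu y
  set T : E → ℝ := fun y => (hroot y).choose with hT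
  have hT1 : ∀ y, φ (y + T y • u) = f (y + T y • u) := fun y => (hroot y).choose_spec.1
  have hTlip : ∀ y₁ y₂, |T y₁ - T y₂| ≤ ((‖φ‖ + ε) / c) * ‖y₁ - y₂‖ := by
    intro y₁ y₂
    have := aux_lip φ f hε hc hf hu hφu y₁ y₂ (T y₁) (T y₂) (hT1 y₁) (hT1 y₂)
    rw [div_mul_eq_mul_div, le_div_iff₀ hc]
    linarith [this]
  have hK0 : 0 ≤ (‖φ‖ + ε) / c :=
    div_nonneg (by linarith [norm_nonneg φ]) hc.le
  have hTcont : Continuous T := by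
    refine (LipschitzWith.of_dist_le_mul (K := ⟨(‖φ‖ + ε) / c, hK0⟩) ?_).continuous
    intro a b
    rw [Real.dist_eq, dist_eq_norm]
    exact hTlip a b
  have hrcont : Continuous fun y : E => y + T y • u :=
    continuous_id.add (hTcont.smul continuous_const)
  have himg : {y : E | φ y = f y} = (fun y : E => y + T y • u) '' Set.univ := by
    ext y
    constructor
    · intro hy
      refine ⟨y, trivial, ?_⟩
      have h0 : φ (y + (0 : ℝ) • u) = f (y + (0 : ℝ) • u) := by simpa using hy
      have hz := aux_lip φ f hε hc hf hu hφu y y (T y) 0 (hT1 y) h0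
      simp only [sub_self, norm_zero, mul_zero, sub_zero] at hz
      have hTy : T y = 0 := by
        have : |T y| ≤ 0 := by nlinarith [abs_nonneg (T y)]
        simpa [abs_nonpos_iff] using this
      simp [hTy]
    · rintro ⟨z, -, rfl⟩
      exact hT1 z
  rw [himg]
  exact (convex_univ : Convex ℝ (Set.univ : Set E)).isPreconnected.image _ hrcont.continuousOn

end aux

theorem exists_zero_of_closed_range_via_disconnectedness
    {X : Type*} [TopologicalSpace X] [ConnectedSpace X]
    {E : Type*} [NormedAddCommGroup E] [NormedSpace ℝ E] [CompleteSpace E]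
    (Φ : X → (E →L[ℝ] ℝ))
    (hrange : IsClosed (Set.range Φ))
    (h : ∀ ε : NNReal, 0 < ε → ∃ f : X → E → ℝ,
      (∀ x : X, LipschitzWith ε (f x)) ∧
      Dense {y : E | Continuous fun x : X => Φ x y - f x y} ∧
      ¬ IsPreconnected {p : X × E | Φ p.1 p.2 = f p.1 p.2}) :
    ∃ x₀ : X, Φ x₀ = 0 := by
  by_contra hno
  push_neg at hno
  -- Step 1: uniform lower bound on ‖Φ x‖
  obtain ⟨δ, hδ0, hδ⟩ : ∃ δ : ℝ, 0 < δ ∧ ∀ x, δ ≤ ‖Φ x‖ := by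
    by_contra hcon
    push_neg at hcon
    have h0 : (0 : E →L[ℝ] ℝ) ∈ closure (Set.range Φ) := by
      rw [Metric.mem_closure_iff]
      intro r hr
      obtain ⟨x, hx⟩ := hcon r hr
      exact ⟨Φ x, Set.mem_range_self x, by rwa [dist_comm, dist_zero_right]⟩
    rw [hrange.closure_eq] at h0
    obtain ⟨x, hx⟩ := h0
    exact hno x hx
  have hδ2 : (0 : ℝ) ≤ δ / 2 := by linarith
  set εn : NNReal := ⟨δ / 2, hδ2⟩ with hεn
  have hεnpos : 0 < εn := by
    rw [← NNReal.coe_lt_coe]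
    show (0 : ℝ) < δ / 2
    linarith
  obtain ⟨f, hf, hdense, hdisc⟩ := h εn hεnpos
  have hfr : ∀ x, ∀ a b : E, |f x a - f x b| ≤ (δ / 2) * ‖a - b‖ := by
    intro x a b
    have := (hf x).dist_le_mul a b
    rwa [Real.dist_eq, dist_eq_norm] at this
  have hε0 : (0 : ℝ) ≤ δ / 2 := hδ2
  have hc0 : (0 : ℝ) < δ / 4 := by linarith
  -- Step 2: choose directions
  have hU : ∀ x : X, ∃ u : E, ‖u‖ ≤ 1 ∧ δ / 2 + δ / 4 ≤ Φ x u := by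
    intro x
    have h34 : (3 * δ / 4 : ℝ) < ‖Φ x‖ := by linarith [hδ x]
    obtain ⟨v, hv1, hv2⟩ := (Φ x).exists_lt_apply_of_lt_opNorm h34
    rw [Real.norm_eq_abs] at hv2
    rcases le_or_gt 0 (Φ x v) with hsign | hsign
    · rw [abs_of_nonneg hsign] at hv2
      exact ⟨v, hv1.le, by linarith⟩
    · refine ⟨-v, by simpa using hv1.le, ?_⟩
      rw [map_neg]
      rw [abs_of_neg hsign] at hv2
      linarith
  choose U hU1 hU2 using hU
  have hroot : ∀ x (y : E), ∃ t : ℝ, Φ x (y + t • U x) = f x (y + t • U x) ∧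
      |t| ≤ |Φ x y - f x y| / (δ / 4) :=
    fun x y => aux_root (Φ x) (f x) (hf x).continuous hε0 hc0 (hfr x) (hU1 x) (hU2 x) y
  have hne : ∀ x, ∃ y : E, Φ x y = f x y := by
    intro x
    obtain ⟨t, ht, -⟩ := hroot x 0
    exact ⟨0 + t • U x, ht⟩
  have hslice : ∀ x, IsPreconnected ((fun y : E => ((x : X), y)) '' {y : E | Φ x y = f x y}) :=
    fun x => ((aux_slice (Φ x) (f x) (hf x).continuous hε0 hc0 (hfr x) (hU1 x)
      (hU2 x))).image _ (Continuous.prodMk_right x).continuousOn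
  -- Step 3: the solution set is preconnected, contradiction
  apply hdisc
  intro u v hu hv hsub ⟨p₁, hp₁S, hp₁u⟩ ⟨p₂, hp₂S, hp₂v⟩
  by_contra hcap
  -- dichotomy per slice
  have hdich : ∀ x : X, (∀ y : E, Φ x y = f x y → (x, y) ∈ u) ∨
      (∀ y : E, Φ x y = f x y → (x, y) ∈ v) := by
    intro x
    by_contra hx
    push_neg at hx
    obtain ⟨⟨y₁, hy₁, hy₁u⟩, ⟨y₂, hy₂, hy₂v⟩⟩ := hx
    have h1 : (x, y₁) ∈ v := (hsub (show ((x, y₁) : X × E) ∈ _ from hy₁)).resolve_left hy₁u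
    have h2 : (x, y₂) ∈ u := (hsub (show ((x, y₂) : X × E) ∈ _ from hy₂)).resolve_right hy₂v
    obtain ⟨p, hpsl, hpu, hpv⟩ := hslice x u v hu hv
      (by rintro p ⟨y, hy, rfl⟩; exact hsub hy)
      ⟨(x, y₂), ⟨y₂, hy₂, rfl⟩, h2⟩ ⟨(x, y₁), ⟨y₁, hy₁, rfl⟩, h1⟩
    obtain ⟨y, hy, rfl⟩ := hpsl
    exact hcap ⟨(x, y), hy, hpu, hpv⟩
  -- key openness lemma
  have key : ∀ w : Set (X × E), IsOpen w → ∀ x₀ : X, ∀ y₀ : E, Φ x₀ y₀ = f x₀ y₀ →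
      (x₀, y₀) ∈ w → ∃ W₀ : Set X, IsOpen W₀ ∧ x₀ ∈ W₀ ∧
        ∀ x ∈ W₀, ∃ y' : E, Φ x y' = f x y' ∧ (x, y') ∈ w := by
    intro w hw x₀ y₀ hroot₀ hmem
    obtain ⟨W, V, hWo, hWm, hVo, hVm, hWV⟩ := mem_nhds_prod_iff'.mp (hw.mem_nhds hmem)
    obtain ⟨ρ, hρ0, hball⟩ := Metric.isOpen_iff.mp hVo y₀ hVm
    set η : ℝ := δ / 4 * ρ / 3 with hη
    have hη0 : 0 < η := by
      rw [hη]; positivity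
    have hden : (0 : ℝ) < ‖Φ x₀‖ + δ / 2 + 1 := by
      have := norm_nonneg (Φ x₀); linarith
    set r₀ : ℝ := min (ρ / 3) (η / (‖Φ x₀‖ + δ / 2 + 1)) with hr₀
    have hr₀0 : 0 < r₀ := lt_min (by linarith) (div_pos hη0 hden)
    obtain ⟨y, hyD, hy⟩ := hdense.exists_mem_open Metric.isOpen_ball
      ⟨y₀, Metric.mem_ball_self hr₀0⟩
    have hyn : ‖y - y₀‖ < r₀ := by rwa [Metric.mem_ball, dist_eq_norm] at hy
    have hcont : Continuous fun x : X => Φ x y - f x y := hyD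
    have hC : (0 : ℝ) ≤ ‖Φ x₀‖ + δ / 2 := by
      have := norm_nonneg (Φ x₀); linarith
    have h3 : |Φ x₀ y - f x₀ y| ≤ (‖Φ x₀‖ + δ / 2) * ‖y - y₀‖ := by
      have h1 : |Φ x₀ y - Φ x₀ y₀| ≤ ‖Φ x₀‖ * ‖y - y₀‖ := by
        have := (Φ x₀).le_opNorm (y - y₀)
        rw [Real.norm_eq_abs, map_sub] at this
        exact this
      have h2 : |f x₀ y - f x₀ y₀| ≤ (δ / 2) * ‖y - y₀‖ := hfr x₀ y y₀
      have he : Φ x₀ y - f x₀ y = (Φ x₀ y - Φ x₀ y₀) - (f x₀ y - f x₀ y₀) := by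
        rw [hroot₀]; ring
      calc |Φ x₀ y - f x₀ y|
          = |(Φ x₀ y - Φ x₀ y₀) - (f x₀ y - f x₀ y₀)| := by rw [he]
        _ ≤ |Φ x₀ y - Φ x₀ y₀| + |f x₀ y - f x₀ y₀| := abs_sub _ _
        _ ≤ ‖Φ x₀‖ * ‖y - y₀‖ + (δ / 2) * ‖y - y₀‖ := add_le_add h1 h2
        _ = (‖Φ x₀‖ + δ / 2) * ‖y - y₀‖ := by ring
    have h4 : (‖Φ x₀‖ + δ / 2) * r₀ < η := by
      have hle : (‖Φ x₀‖ + δ / 2) * r₀ ≤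
          (‖Φ x₀‖ + δ / 2) * (η / (‖Φ x₀‖ + δ / 2 + 1)) :=
        mul_le_mul_of_nonneg_left (min_le_right _ _) hC
      have h5 : (‖Φ x₀‖ + δ / 2) * (η / (‖Φ x₀‖ + δ / 2 + 1)) < η := by
        rw [mul_comm, div_mul_eq_mul_div, div_lt_iff₀ hden]
        nlinarith
      linarith
    have hx₀small : |Φ x₀ y - f x₀ y| < η := by
      have := mul_le_mul_of_nonneg_left hyn.le hC
      linarith
    refine ⟨W ∩ {x : X | |Φ x y - f x y| < η},
      hWo.inter (isOpen_lt hcont.abs continuous_const), ⟨hWm, hx₀small⟩, ?_⟩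
    rintro x ⟨hxW, hxW'⟩
    obtain ⟨t, htroot, htb⟩ := hroot x y
    refine ⟨y + t • U x, htroot, hWV ⟨hxW, hball ?_⟩⟩
    rw [Metric.mem_ball, dist_eq_norm]
    have heq : y + t • U x - y₀ = (y - y₀) + t • U x := by abel
    have hnb : ‖y + t • U x - y₀‖ ≤ ‖y - y₀‖ + |t| := by
      calc ‖y + t • U x - y₀‖ = ‖(y - y₀) + t • U x‖ := by rw [heq]
        _ ≤ ‖y - y₀‖ + ‖t • U x‖ := norm_add_le _ _
        _ ≤ ‖y - y₀‖ + |t| := by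
            rw [norm_smul, Real.norm_eq_abs]
            have := mul_le_of_le_one_right (abs_nonneg t) (hU1 x)
            linarith
    have hq : |Φ x y - f x y| / (δ / 4) < ρ / 3 := by
      rw [div_lt_iff₀ hc0]
      have : |Φ x y - f x y| < η := hxW'
      rw [hη] at this
      linarith
    have ht3 : |t| < ρ / 3 := lt_of_le_of_lt htb hq
    have hr3 : r₀ ≤ ρ / 3 := min_le_left _ _
    linarith
  -- the two open pieces of X
  have hXuopen : IsOpen {x : X | ∀ y : E, Φ x y = f x y → (x, y) ∈ u} := by
    rw [isOpen_iff_forall_mem_open]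
    intro x₀ hx₀
    obtain ⟨y₀, hy₀⟩ := hne x₀
    obtain ⟨W₀, hW₀o, hW₀m, hW₀⟩ := key u hu x₀ y₀ hy₀ (hx₀ y₀ hy₀)
    refine ⟨W₀, ?_, hW₀o, hW₀m⟩
    intro x hx
    obtain ⟨y', hy'root, hy'w⟩ := hW₀ x hx
    rcases hdich x with hcase | hcase
    · exact hcase
    · exact (hcap ⟨(x, y'), hy'root, hy'w, hcase y' hy'root⟩).elim
  have hXvopen : IsOpen {x : X | ∀ y : E, Φ x y = f x y → (x, y) ∈ v} := by
    rw [isOpen_iff_forall_mem_open]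
    intro x₀ hx₀
    obtain ⟨y₀, hy₀⟩ := hne x₀
    obtain ⟨W₀, hW₀o, hW₀m, hW₀⟩ := key v hv x₀ y₀ hy₀ (hx₀ y₀ hy₀)
    refine ⟨W₀, ?_, hW₀o, hW₀m⟩
    intro x hx
    obtain ⟨y', hy'root, hy'w⟩ := hW₀ x hx
    rcases hdich x with hcase | hcase
    · exact (hcap ⟨(x, y'), hy'root, hcase y' hy'root, hy'w⟩).elim
    · exact hcase
  -- nonemptiness of the pieces
  have hp₁Xu : p₁.1 ∈ {x : X | ∀ y : E, Φ x y = f x y → (x, y) ∈ u} := by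
    rcases hdich p₁.1 with hcase | hcase
    · exact hcase
    · exfalso
      have hv₁ : ((p₁.1, p₁.2) : X × E) ∈ v := hcase p₁.2 hp₁S
      exact hcap ⟨p₁, hp₁S, hp₁u, by simpa using hv₁⟩
  have hp₂Xv : p₂.1 ∈ {x : X | ∀ y : E, Φ x y = f x y → (x, y) ∈ v} := by
    rcases hdich p₂.1 with hcase | hcase
    · exfalso
      have hu₂ : ((p₂.1, p₂.2) : X × E) ∈ u := hcase p₂.2 hp₂S
      exact hcap ⟨p₂, hp₂S, by simpa using hu₂, hp₂v⟩
    · exact hcase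
  -- X connected: contradiction
  obtain ⟨x, -, hxu, hxv⟩ := isPreconnected_univ (u := {x : X | ∀ y : E, Φ x y = f x y → (x, y) ∈ u})
    (v := {x : X | ∀ y : E, Φ x y = f x y → (x, y) ∈ v}) hXuopen hXvopen
    (fun x _ => hdich x) ⟨p₁.1, trivial, hp₁Xu⟩ ⟨p₂.1, trivial, hp₂Xv⟩
  obtain ⟨y₀, hy₀⟩ := hne x
  exact hcap ⟨(x, y₀), hy₀, hxu y₀ hy₀, hxv y₀ hy₀⟩
end

section
/- Let X and Y be topological spaces with Y connected, and let Q : X → 2^Y be a lower semicontinuous multifunction such that Q(x) is non-empty and connected for every x ∈ X. If X is connected, then the graph {(x,y) ∈ X × Y : y ∈ Q(x)} is connected. -/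
theorem graph_connected_of_lsc_multifunction
    {X Y : Type*} [TopologicalSpace X] [TopologicalSpace Y]
    [ConnectedSpace X] [ConnectedSpace Y]
    (Q : X → Set Y)
    (hlsc : ∀ V : Set Y, IsOpen V → IsOpen {x : X | (Q x ∩ V).Nonempty})
    (hne : ∀ x : X, (Q x).Nonempty)
    (hconn : ∀ x : X, IsConnected (Q x)) :
    IsConnected {p : X × Y | p.2 ∈ Q p.1} := by
  set s : Set (X × Y) := {p : X × Y | p.2 ∈ Q p.1} with hs
  obtain ⟨x0⟩ : Nonempty X := inferInstance
  obtain ⟨y0, hy0⟩ := hne x0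
  refine ⟨⟨(x0, y0), hy0⟩, ?_⟩
  intro U V hU hV hsub hUne hVne
  by_contra hempty
  rw [Set.not_nonempty_iff_eq_empty] at hempty
  -- each fiber lies entirely in U or entirely in V
  have fibsub : ∀ x : X, (fun y => (x, y)) '' Q x ⊆ s := by
    rintro x _ ⟨y, hy, rfl⟩; exact hy
  have dich : ∀ x : X, (∀ y ∈ Q x, (x, y) ∈ U) ∨ (∀ y ∈ Q x, (x, y) ∈ V) := by
    intro x
    by_contra h
    push_neg at h
    obtain ⟨⟨yu, hyu, hyuU⟩, ⟨yv, hyv, hyvV⟩⟩ := h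
    have fib : IsPreconnected ((fun y => (x, y)) '' Q x) :=
      (hconn x).isPreconnected.image _ (Continuous.prodMk_right x).continuousOn
    have hyuV : (x, yu) ∈ V := by
      rcases hsub (show (x, yu) ∈ s from hyu) with h | h
      · exact absurd h hyuU
      · exact h
    have hyvU : (x, yv) ∈ U := by
      rcases hsub (show (x, yv) ∈ s from hyv) with h | h
      · exact h
      · exact absurd h hyvV
    have := fib U V hU hV (fun p hp => hsub (fibsub x hp))
      ⟨(x, yv), ⟨yv, hyv, rfl⟩, hyvU⟩ ⟨(x, yu), ⟨yu, hyu, rfl⟩, hyuV⟩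
    obtain ⟨p, hp, hpUV⟩ := this
    have : p ∈ s ∩ (U ∩ V) := ⟨fibsub x hp, hpUV⟩
    rw [hempty] at this
    exact this
  set A : Set X := {x | ∀ y ∈ Q x, (x, y) ∈ U} with hA
  set B : Set X := {x | ∀ y ∈ Q x, (x, y) ∈ V} with hB
  have hAB : ∀ x, x ∈ A → x ∈ B → False := by
    intro x hxA hxB
    obtain ⟨y, hy⟩ := hne x
    have : (x, y) ∈ s ∩ (U ∩ V) := ⟨hy, hxA y hy, hxB y hy⟩
    rw [hempty] at this
    exact this
  -- A is open
  have openAux : ∀ (W : Set (X × Y)) (C : Set X), IsOpen W →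
      C = {x | ∀ y ∈ Q x, (x, y) ∈ W} →
      (∀ x, (∃ y ∈ Q x, (x, y) ∈ W) → x ∈ C) → IsOpen C := by
    intro W C hWopen hCdef hC
    rw [isOpen_iff_mem_nhds]
    intro x hx
    obtain ⟨y, hy⟩ := hne x
    have hxyW : (x, y) ∈ W := by rw [hCdef] at hx; exact hx y hy
    obtain ⟨O, P, hO, hP, hxO, hyP, hOP⟩ := isOpen_prod_iff.mp hWopen x y hxyW
    have hN : IsOpen (O ∩ {x : X | (Q x ∩ P).Nonempty}) := hO.inter (hlsc P hP)
    refine Filter.mem_of_superset (hN.mem_nhds ⟨hxO, y, hy, hyP⟩) ?_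
    rintro x' ⟨hx'O, y', hy'Q, hy'P⟩
    exact hC x' ⟨y', hy'Q, hOP ⟨hx'O, hy'P⟩⟩
  have memA : ∀ x, (∃ y ∈ Q x, (x, y) ∈ U) → x ∈ A := by
    rintro x ⟨y, hyQ, hyU⟩
    rcases dich x with h | h
    · exact h
    · exfalso
      have : (x, y) ∈ s ∩ (U ∩ V) := ⟨hyQ, hyU, h y hyQ⟩
      rw [hempty] at this
      exact this
  have memB : ∀ x, (∃ y ∈ Q x, (x, y) ∈ V) → x ∈ B := by
    rintro x ⟨y, hyQ, hyV⟩
    rcases dich x with h | h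
    · exfalso
      have : (x, y) ∈ s ∩ (U ∩ V) := ⟨hyQ, h y hyQ, hyV⟩
      rw [hempty] at this
      exact this
    · exact h
  have hAopen : IsOpen A := openAux U A hU rfl memA
  have hBopen : IsOpen B := openAux V B hV rfl memB
  obtain ⟨⟨a, b⟩, hab, habU⟩ := hUne
  obtain ⟨⟨c, d⟩, hcd, hcdV⟩ := hVne
  have hAne : a ∈ A := memA a ⟨b, hab, habU⟩
  have hBne : c ∈ B := memB c ⟨d, hcd, hcdV⟩
  have := isPreconnected_univ (u := A) (v := B) hAopen hBopen
    (fun x _ => (dich x).imp id id)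
    ⟨a, trivial, hAne⟩ ⟨c, trivial, hBne⟩
  obtain ⟨x, -, hxA, hxB⟩ := this
  exact hAB x hxA hxB
end

section
/- Let X be a topological space, and let f, g : X × [0,1] → ℝ with f(x,·) continuous for each x. Suppose for each x ∈ X the set T_x = {t ∈ [0,1] : f(x,t) = 0} is a non-empty connected set (hence a subinterval), and that the set T = {(x,t) : f(x,t) = 0} is closed in X × [0,1]. If S ⊆ X × [0,1] is connected with projection onto [0,1] equal to all of [0,1], then S ∩ T ≠ ∅. -/
open Set

lemma icc_set_open_below (v : Set unitInterval) (hv : IsOpen v) :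
    IsOpen {t : unitInterval | Icc 0 t ⊆ v} := by
  rw [Metric.isOpen_iff]
  intro t ht
  obtain ⟨δ, hδ, hth⟩ := (isClosed_Icc.isCompact).exists_thickening_subset_open hv ht
  refine ⟨δ, hδ, fun t' ht' => fun s hs => ?_⟩
  rcases le_or_gt s t with h | h
  · exact ht ⟨hs.1, h⟩
  · apply hth
    rw [Metric.mem_thickening_iff]
    refine ⟨t, ⟨t.2.1, le_rfl⟩, ?_⟩
    rw [Subtype.dist_eq, Real.dist_eq, abs_of_pos (sub_pos.mpr (by exact_mod_cast h))]
    have h2 : (s : ℝ) ≤ t' := hs.2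
    have := Metric.mem_ball.mp ht'
    rw [Subtype.dist_eq, Real.dist_eq] at this
    have := abs_lt.mp this
    linarith [this.1, this.2]

lemma icc_set_open_above (v : Set unitInterval) (hv : IsOpen v) :
    IsOpen {t : unitInterval | Icc t 1 ⊆ v} := by
  rw [Metric.isOpen_iff]
  intro t ht
  obtain ⟨δ, hδ, hth⟩ := (isClosed_Icc.isCompact).exists_thickening_subset_open hv ht
  refine ⟨δ, hδ, fun t' ht' => fun s hs => ?_⟩
  rcases le_or_gt t s with h | h
  · exact ht ⟨h, hs.2⟩
  · apply hth
    rw [Metric.mem_thickening_iff]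
    refine ⟨t, ⟨le_rfl, t.2.2⟩, ?_⟩
    rw [Subtype.dist_eq, Real.dist_eq, abs_of_neg (sub_neg.mpr (by exact_mod_cast h))]
    have h2 : (t' : ℝ) ≤ s := hs.1
    have := Metric.mem_ball.mp ht'
    rw [Subtype.dist_eq, Real.dist_eq] at this
    have := abs_lt.mp this
    linarith [this.1, this.2]

lemma open_below {X : Type*} [TopologicalSpace X] (U : Set (X × unitInterval)) (hU : IsOpen U) :
    IsOpen {p : X × unitInterval | ∀ s, s ≤ p.2 → (p.1, s) ∈ U} := by
  rw [isOpen_iff_mem_nhds]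
  rintro ⟨x, t⟩ hp
  obtain ⟨u, v, hu, hv, hxu, hIv, huv⟩ := generalized_tube_lemma isCompact_singleton
    ((isClosed_Icc (a := (0:unitInterval)) (b := t)).isCompact) hU
    (by rintro ⟨y, s⟩ ⟨(rfl : y = x), hq2⟩; exact hp _ hq2.2)
  have : u ×ˢ {t' : unitInterval | Icc 0 t' ⊆ v} ∈ nhds (x, t) := by
    exact prod_mem_nhds (hu.mem_nhds (hxu rfl)) ((icc_set_open_below v hv).mem_nhds hIv)
  exact Filter.mem_of_superset this (by
    rintro ⟨y, t'⟩ ⟨hy, ht'⟩ s hs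
    exact huv ⟨hy, ht' ⟨s.2.1, hs⟩⟩)

lemma open_above {X : Type*} [TopologicalSpace X] (U : Set (X × unitInterval)) (hU : IsOpen U) :
    IsOpen {p : X × unitInterval | ∀ s, p.2 ≤ s → (p.1, s) ∈ U} := by
  rw [isOpen_iff_mem_nhds]
  rintro ⟨x, t⟩ hp
  obtain ⟨u, v, hu, hv, hxu, hIv, huv⟩ := generalized_tube_lemma isCompact_singleton
    ((isClosed_Icc (a := t) (b := (1:unitInterval))).isCompact) hU
    (by rintro ⟨y, s⟩ ⟨(rfl : y = x), hq2⟩; exact hp _ hq2.1)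
  have : u ×ˢ {t' : unitInterval | Icc t' 1 ⊆ v} ∈ nhds (x, t) := by
    exact prod_mem_nhds (hu.mem_nhds (hxu rfl)) ((icc_set_open_above v hv).mem_nhds hIv)
  exact Filter.mem_of_superset this (by
    rintro ⟨y, t'⟩ ⟨hy, ht'⟩ s hs
    exact huv ⟨hy, ht' ⟨hs, s.2.2⟩⟩)

theorem connected_set_meets_closed_zero_set
    {X : Type*} [TopologicalSpace X]
    (f g : X × unitInterval → ℝ)
    (hfc : ∀ x : X, Continuous fun t : unitInterval => f (x, t))
    (hTx : ∀ x : X, ({t : unitInterval | f (x, t) = 0}).Nonempty ∧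
      IsPreconnected {t : unitInterval | f (x, t) = 0})
    (hTclosed : IsClosed {p : X × unitInterval | f p = 0})
    (S : Set (X × unitInterval)) (hS : IsConnected S)
    (hproj : Prod.snd '' S = Set.univ) :
    (S ∩ {p : X × unitInterval | f p = 0}).Nonempty := by
  by_contra hcon
  rw [Set.not_nonempty_iff_eq_empty, Set.eq_empty_iff_forall_notMem] at hcon
  have hne : ∀ p ∈ S, f p ≠ 0 := fun p hp hf => hcon p ⟨hp, hf⟩
  set A := {p : X × unitInterval | ∀ s, s ≤ p.2 → f (p.1, s) ≠ 0} with hAdef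
  set B := {p : X × unitInterval | ∀ s, p.2 ≤ s → f (p.1, s) ≠ 0} with hBdef
  have hA : IsOpen A := open_below {p : X × unitInterval | f p = 0}ᶜ hTclosed.isOpen_compl
  have hB : IsOpen B := open_above {p : X × unitInterval | f p = 0}ᶜ hTclosed.isOpen_compl
  have hsub : S ⊆ A ∪ B := by
    rintro ⟨x, t⟩ hp
    by_contra hn
    rw [Set.mem_union, not_or] at hn
    obtain ⟨hnA, hnB⟩ := hn
    simp only [hAdef, hBdef, Set.mem_setOf_eq, not_forall] at hnA hnB
    obtain ⟨s1, hs1, hfs1⟩ := hnA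
    obtain ⟨s2, hs2, hfs2⟩ := hnB
    rw [not_ne_iff] at hfs1 hfs2
    have : t ∈ {t : unitInterval | f (x, t) = 0} :=
      (hTx x).2.Icc_subset hfs1 hfs2 ⟨hs1, hs2⟩
    exact hne _ hp this
  have hSA : (S ∩ A).Nonempty := by
    have h0 : (0 : unitInterval) ∈ Prod.snd '' S := by rw [hproj]; trivial
    obtain ⟨p, hpS, hp0⟩ := h0
    refine ⟨p, hpS, ?_⟩
    rcases hsub hpS with h | h
    · exact h
    · exfalso
      obtain ⟨s, hs⟩ := (hTx p.1).1
      exact h s (hp0 ▸ s.2.1) hs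
  have hSB : (S ∩ B).Nonempty := by
    have h1 : (1 : unitInterval) ∈ Prod.snd '' S := by rw [hproj]; trivial
    obtain ⟨p, hpS, hp1⟩ := h1
    refine ⟨p, hpS, ?_⟩
    rcases hsub hpS with h | h
    · exfalso
      obtain ⟨s, hs⟩ := (hTx p.1).1
      exact h s (hp1 ▸ s.2.2) hs
    · exact h
  obtain ⟨q, hqS, hqA, hqB⟩ := hS.isPreconnected A B hA hB hsub hSA hSB
  obtain ⟨s, hs⟩ := (hTx q.1).1
  rcases le_total s q.2 with h | h
  · exact hqA s h hs
  · exact hqB s h hs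
end

section
/- Let X be a topological space, E a real topological vector space, and Λ a convex subset of a real vector space of functions from X × E to ℝ, equipped with a vector topology. Let Q : Λ → 2^{X×E} be a lower semicontinuous multifunction such that Q(f) is non-empty and connected for every f ∈ Λ. Then the graph {(f,x,y) : (x,y) ∈ Q(f)} is connected. -/
/-! The projection of the graph onto the domain is continuous, surjective and, by lower
semicontinuity, open; so it is a quotient map onto a connected space whose fibres `{l} × Q l` are
connected, and its domain is therefore connected. A nonempty convex set supplies the connected
domain. -/

open Set Topology

section LowerSemicontinuousMultifunction

variable {α β : Type*} [TopologicalSpace α] [TopologicalSpace β] {Q : α → Set β}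

def graphFst (Q : α → Set β) : {p : α × β // p.2 ∈ Q p.1} → α := fun p ↦ p.1.1

theorem continuous_graphFst : Continuous (graphFst Q) :=
  continuous_fst.comp continuous_subtype_val

theorem isOpenMap_graphFst
    (hQ : ∀ V : Set β, IsOpen V → IsOpen {a | (Q a ∩ V).Nonempty}) :
    IsOpenMap (graphFst Q) := by
  rintro _ ⟨W, hW, rfl⟩
  refine isOpen_iff_forall_mem_open.mpr ?_
  rintro _ ⟨⟨⟨a, b⟩, hb⟩, hbW, rfl⟩
  obtain ⟨U, V, hU, hV, haU, hbV, hUV⟩ := isOpen_prod_iff.mp hW a b hbW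
  refine ⟨U ∩ {a' | (Q a' ∩ V).Nonempty}, ?_, hU.inter (hQ V hV), haU, b, hb, hbV⟩
  rintro a' ⟨ha'U, b', hb', hb'V⟩
  exact ⟨⟨(a', b'), hb'⟩, hUV ⟨ha'U, hb'V⟩, rfl⟩

theorem isConnected_graphFst_preimage_singleton {a : α} (hQ : IsConnected (Q a)) :
    IsConnected (graphFst Q ⁻¹' {a}) := by
  have : ConnectedSpace (Q a) := isConnected_iff_connectedSpace.mp hQ
  convert isConnected_range (f := fun b : Q a ↦ (⟨(a, b), b.2⟩ : {p : α × β // p.2 ∈ Q p.1}))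
    (by fun_prop)
  ext ⟨⟨a', b⟩, hb⟩
  constructor
  · rintro rfl
    exact ⟨⟨b, hb⟩, rfl⟩
  · rintro ⟨_, h⟩
    cases h
    rfl

theorem isConnected_graph_of_lowerSemicontinuous [ConnectedSpace α]
    (hlsc : ∀ V : Set β, IsOpen V → IsOpen {a | (Q a ∩ V).Nonempty})
    (hconn : ∀ a, IsConnected (Q a)) :
    IsConnected {p : α × β | p.2 ∈ Q p.1} := by
  have hquot : IsQuotientMap (graphFst Q) :=
    (isOpenMap_graphFst hlsc).isQuotientMap continuous_graphFst
      fun a ↦ ⟨⟨(a, (hconn a).nonempty.some), (hconn a).nonempty.some_mem⟩, rfl⟩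
  have := hquot.isCoinducing.isConnected_preimage_of_isClosed
    (fun a ↦ isConnected_graphFst_preimage_singleton (hconn a)) isClosed_univ isConnected_univ
  rw [isConnected_iff_connectedSpace]
  exact connectedSpace_iff_univ.mpr this

end LowerSemicontinuousMultifunction

theorem graph_connected_of_lsc_multifunction_on_convex_general
    {X : Type*} [TopologicalSpace X]
    {E : Type*} [TopologicalSpace E]
    {F : Type*} [AddCommGroup F] [Module ℝ F] [TopologicalSpace F]
    [IsTopologicalAddGroup F] [ContinuousSMul ℝ F]
    (Λ : Set F) (hΛconv : Convex ℝ Λ) (hΛne : Λ.Nonempty)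
    (Q : Λ → Set (X × E))
    (hlsc : ∀ V : Set (X × E), IsOpen V → IsOpen {l : Λ | (Q l ∩ V).Nonempty})
    (hconn : ∀ l : Λ, IsConnected (Q l)) :
    IsConnected {p : Λ × (X × E) | p.2 ∈ Q p.1} := by
  have : ConnectedSpace Λ := isConnected_iff_connectedSpace.mp (hΛconv.isConnected hΛne)
  exact isConnected_graph_of_lowerSemicontinuous hlsc hconn

theorem graph_connected_of_lsc_multifunction_on_convex
    {X : Type*} [TopologicalSpace X]
    {E : Type*} [AddCommGroup E] [Module ℝ E] [TopologicalSpace E]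
    [IsTopologicalAddGroup E] [ContinuousSMul ℝ E]
    {F : Type*} [AddCommGroup F] [Module ℝ F] [TopologicalSpace F]
    [IsTopologicalAddGroup F] [ContinuousSMul ℝ F]
    (toFun : F →ₗ[ℝ] (X × E → ℝ))
    (Λ : Set F) (hΛconv : Convex ℝ Λ) (hΛne : Λ.Nonempty)
    (Q : Λ → Set (X × E))
    (hlsc : ∀ V : Set (X × E), IsOpen V → IsOpen {l : Λ | (Q l ∩ V).Nonempty})
    (hne : ∀ l : Λ, (Q l).Nonempty)
    (hconn : ∀ l : Λ, IsConnected (Q l)) :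
    IsConnected {p : Λ × (X × E) | p.2 ∈ Q p.1} :=
  graph_connected_of_lsc_multifunction_on_convex_general Λ hΛconv hΛne Q hlsc hconn
end
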